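/- arXiv:2502.09968 — 7 statements merged into one kernel-verified Lean document; each statement's English description precedes it below -/
import Mathlib

section
/- If G = (V,E) is an α-heavy graph with average degree d and maximum degree Δ, then every maximal matching of G has cardinality at least d·|V|/(4Δ − α − 2). -/
/-- A matching of `G`: a set of edges of `G` that are pairwise vertex-disjoint. -/
def IsMatching {V : Type*} (G : SimpleGraph V) (M : Set (Sym2 V)) : Prop :=
  M ⊆ G.edgeSet ∧ ∀ e ∈ M, ∀ f ∈ M, e ≠ f → ∀ v, v ∈ e → v ∉ f

/-- A maximal matching: a matching not properly contained in another matching. -/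
def IsMaximalMatching {V : Type*} (G : SimpleGraph V) (M : Set (Sym2 V)) : Prop :=
  IsMatching G M ∧ ∀ M', IsMatching G M' → M ⊆ M' → M' = M

/-- A vertex is covered by a matching if it is incident to a matching edge. -/
def Covered {V : Type*} (M : Set (Sym2 V)) (v : V) : Prop :=
  ∃ e ∈ M, v ∈ e

/-- An induced 4-cycle of `G`, recorded as its set of four edges. -/
def IsInduced4Cycle {V : Type*} (G : SimpleGraph V) (C : Set (Sym2 V)) : Prop :=
  ∃ a b c d : V, a ≠ c ∧ b ≠ d ∧ G.Adj a b ∧ G.Adj b c ∧ G.Adj c d ∧ G.Adj d a ∧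
    ¬ G.Adj a c ∧ ¬ G.Adj b d ∧ C = {s(a,b), s(b,c), s(c,d), s(d,a)}

/-- `G` is `α`-heavy: every edge `e` lies in at least `α` induced 4-cycles such that
`e` is the only common edge of any two of these cycles. -/
def IsHeavy {V : Type*} (G : SimpleGraph V) (α : ℕ) : Prop :=
  ∀ e ∈ G.edgeSet, ∃ 𝒞 : Set (Set (Sym2 V)),
    α ≤ 𝒞.ncard ∧ (∀ C ∈ 𝒞, IsInduced4Cycle G C ∧ e ∈ C) ∧
    ∀ C ∈ 𝒞, ∀ C' ∈ 𝒞, C ≠ C' → C ∩ C' = {e}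

/-- The hypercube graph `Q_n` on binary strings of length `n`:
two strings are adjacent iff they differ in exactly one position. -/
def hypercube (n : ℕ) : SimpleGraph (Fin n → Bool) :=
  SimpleGraph.fromRel (fun x y => ∃! i, x i ≠ y i)

/-- The permutahedron graph `Π_n` on permutations of `[n]`:
`σ, τ` are adjacent iff `τ = σ * τᵢ` for an adjacent transposition `τᵢ = (i, i+1)`. -/
def permutahedron (n : ℕ) : SimpleGraph (Equiv.Perm (Fin n)) :=
  SimpleGraph.fromRel
    (fun σ τ => ∃ i j : Fin n, (i : ℕ) + 1 = (j : ℕ) ∧ τ = σ * Equiv.swap i j)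

/-- The neighborhood of the set `X` inside the set `S`. -/
def nbhdIn {V : Type*} (G : SimpleGraph V) (X S : Set V) : Set V :=
  {y ∈ S | ∃ x ∈ X, G.Adj x y}

/-!
The vertices `U` covered by a maximal matching `M` form a vertex cover with `|U| ≤ 2|M|`.
Let `T` be the set of edges with both ends in `U`; it contains `M`. Counting incidences between
`U` and the edges, each edge is counted at least once and each edge of `T` twice, so
`|E| + |T| ≤ Δ|U| ≤ 2Δ|M|`. For a matching edge `ab` on an induced 4-cycle `abcd`, maximality
puts `c` or `d` in `U`, so `bc` or `da` lies in `T \ M`. As two of the `α` cycles at `ab` share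
only `ab`, every matching edge meets at least `α` edges of `T \ M`, while an edge meets at most
two matching edges; hence `α|M| ≤ 2|T \ M|`, and altogether `2|E| + (α + 2)|M| ≤ 4Δ|M|`.
-/

open Finset

theorem Sym2.card_toFinset_le_two {α : Type*} [DecidableEq α] (z : Sym2 α) :
    #z.toFinset ≤ 2 := by
  rw [Sym2.card_toFinset]
  split <;> norm_num

section

variable {V : Type*} {G : SimpleGraph V} {M C : Set (Sym2 V)} {e f : Sym2 V} {Δ α : ℕ}

theorem IsMatching.eq_of_mem_of_mem (hM : IsMatching G M) (he : e ∈ M) (hf : f ∈ M) {v : V}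
    (hve : v ∈ e) (hvf : v ∈ f) : e = f :=
  by_contra fun hne => hM.2 e he f hf hne v hve hvf

theorem IsMaximalMatching.exists_covered_of_mem_edgeSet (hM : IsMaximalMatching G M)
    (he : e ∈ G.edgeSet) : ∃ v ∈ e, Covered M v := by
  by_contra! h
  have hins : IsMatching G (insert e M) := by
    refine ⟨Set.insert_subset he hM.1.1, ?_⟩
    rintro e' (rfl | he') f' (rfl | hf') hne v hve hvf
    · exact hne rfl
    · exact h v hve ⟨f', hf', hvf⟩
    · exact h v hvf ⟨e', he', hve⟩
    · exact hM.1.2 e' he' f' hf' hne v hve hvf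
  have heM : e ∈ M := hM.2 _ hins (Set.subset_insert e M) ▸ Set.mem_insert e M
  obtain ⟨v, hv⟩ : ∃ v, v ∈ e := ⟨e.out.1, Sym2.out_fst_mem e⟩
  exact h v hv ⟨e, heM, hv⟩

theorem IsMaximalMatching.isVertexCover (hM : IsMaximalMatching G M) :
    G.IsVertexCover {v | Covered M v} := fun v w hvw => by
  simpa using hM.exists_covered_of_mem_edgeSet (G.mem_edgeSet.mpr hvw)

theorem IsInduced4Cycle.exists_rotation (hC : IsInduced4Cycle G C) (hf : f ∈ C) :
    ∃ a b c d, a ≠ c ∧ b ≠ d ∧ G.Adj a b ∧ G.Adj c d ∧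
      f = s(a, b) ∧ s(b, c) ∈ C ∧ s(d, a) ∈ C ∧ C ⊆ G.edgeSet := by
  obtain ⟨a, b, c, d, hac, hbd, hab, hbc, hcd, hda, -, -, rfl⟩ := hC
  have hsub : ({s(a, b), s(b, c), s(c, d), s(d, a)} : Set (Sym2 V)) ⊆ G.edgeSet := by
    simp [Set.insert_subset_iff, hab, hbc, hcd, hda]
  simp only [Set.mem_insert_iff, Set.mem_singleton_iff] at hf
  rcases hf with rfl | rfl | rfl | rfl
  · exact ⟨a, b, c, d, hac, hbd, hab, hcd, rfl, by simp, by simp, hsub⟩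
  · exact ⟨b, c, d, a, hbd, hac.symm, hbc, hda, rfl, by simp, by simp, hsub⟩
  · exact ⟨c, d, a, b, hac.symm, hbd.symm, hcd, hab, rfl, by simp, by simp, hsub⟩
  · exact ⟨d, a, b, c, hbd.symm, hac, hda, hbc, rfl, by simp, by simp, hsub⟩

theorem IsMaximalMatching.exists_covered_edge_meeting (hM : IsMaximalMatching G M) (hf : f ∈ M)
    (hC : IsInduced4Cycle G C) (hfC : f ∈ C) :
    ∃ g ∈ C, g ≠ f ∧ g ∈ G.edgeSet ∧ (∀ v ∈ g, Covered M v) ∧ ∃ v ∈ f, v ∈ g := by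
  obtain ⟨a, b, c, d, hac, hbd, hab, hcd, rfl, hbcC, hdaC, hCE⟩ := hC.exists_rotation hfC
  have hcova : Covered M a := ⟨_, hf, Sym2.mem_mk_left a b⟩
  have hcovb : Covered M b := ⟨_, hf, Sym2.mem_mk_right a b⟩
  obtain ⟨w, hw, hcovw⟩ := hM.exists_covered_of_mem_edgeSet (G.mem_edgeSet.mpr hcd)
  rcases Sym2.mem_iff.mp hw with rfl | rfl
  · refine ⟨s(b, w), hbcC, ?_, hCE hbcC, ?_, b, by simp, by simp⟩
    · simp [hab.ne', hac.symm]
    · simp [hcovb, hcovw]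
  · refine ⟨s(w, a), hdaC, ?_, hCE hdaC, ?_, a, by simp, by simp⟩
    · simp [hab.ne, hbd.symm]
    · simp [hcova, hcovw]

theorem SimpleGraph.IsVertexCover.card_edgeFinset_add_card_filter_subset_le [Fintype V]
    [DecidableEq V] [DecidableRel G.Adj] {U : Finset V} (hU : G.IsVertexCover ↑U)
    (hΔ : ∀ v, G.degree v ≤ Δ) :
    #G.edgeFinset + #{e ∈ G.edgeFinset | e.toFinset ⊆ U} ≤ Δ * #U := by
  have hedge : ∀ e ∈ G.edgeFinset,
      1 + (if e.toFinset ⊆ U then 1 else 0) ≤ #{v ∈ U | v ∈ e} := by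
    intro e he
    split_ifs with hsub
    · have hfilter : {v ∈ U | v ∈ e} = e.toFinset := by
        ext v
        simpa using fun hv => hsub (Sym2.mem_toFinset.mpr hv)
      rw [hfilter, Sym2.card_toFinset_of_not_isDiag _
        (G.not_isDiag_of_mem_edgeSet (G.mem_edgeFinset.mp he))]
    · induction e with | h x y =>
      rcases hU (G.mem_edgeFinset.mp he) with hx | hy
      · exact card_pos.mpr ⟨x, by simpa using hx⟩
      · exact card_pos.mpr ⟨y, by simpa using hy⟩
  calc #G.edgeFinset + #{e ∈ G.edgeFinset | e.toFinset ⊆ U}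
      = ∑ e ∈ G.edgeFinset, (1 + if e.toFinset ⊆ U then 1 else 0) := by
        rw [sum_add_distrib, card_filter, card_eq_sum_ones]
    _ ≤ ∑ e ∈ G.edgeFinset, #{v ∈ U | v ∈ e} := sum_le_sum hedge
    _ = ∑ v ∈ U, #{e ∈ G.edgeFinset | v ∈ e} :=
        (sum_card_bipartiteAbove_eq_sum_card_bipartiteBelow (fun v e => v ∈ e)).symm
    _ = ∑ v ∈ U, G.degree v := by
        simp_rw [← G.incidenceFinset_eq_filter, G.card_incidenceFinset_eq_degree]
    _ ≤ Δ * #U := by simpa [mul_comm] using sum_le_card_nsmul U _ Δ fun v _ => hΔ v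

open Classical in
theorem IsMatching.card_mul_le_card_mul_two [DecidableEq V] {M S : Finset (Sym2 V)}
    (hM : IsMatching G ↑M) (h : ∀ f ∈ M, α ≤ #{g ∈ S | ∃ v ∈ f, v ∈ g}) :
    #M * α ≤ #S * 2 := by
  refine card_mul_le_card_mul (fun f g => ∃ v ∈ f, v ∈ g) h fun g _ => ?_
  calc #{f ∈ M | ∃ v ∈ f, v ∈ g}
      ≤ #(g.toFinset.biUnion fun v => {f ∈ M | v ∈ f}) := by
        refine card_le_card fun f hf => ?_
        obtain ⟨hfM, v, hvf, hvg⟩ := mem_filter.mp hf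
        exact mem_biUnion.mpr ⟨v, Sym2.mem_toFinset.mpr hvg, mem_filter.mpr ⟨hfM, hvf⟩⟩
    _ ≤ #g.toFinset * 1 := card_biUnion_le_card_mul _ _ _ fun v _ =>
        card_le_one.mpr fun f hf f' hf' => by
          simp only [mem_filter] at hf hf'
          exact hM.eq_of_mem_of_mem hf.1 hf'.1 hf.2 hf'.2
    _ ≤ 2 := by simpa using g.card_toFinset_le_two

open Classical in
theorem IsHeavy.le_card_filter_meeting (hG : IsHeavy G α) {M S : Finset (Sym2 V)}
    (hM : IsMaximalMatching G ↑M) (hf : f ∈ M)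
    (hS : ∀ g ∈ G.edgeSet, g ∉ M → (∀ v ∈ g, Covered (M : Set (Sym2 V)) v) → g ∈ S) :
    α ≤ #{g ∈ S | ∃ v ∈ f, v ∈ g} := by
  obtain ⟨𝒞, hα, h𝒞, hinter⟩ := hG f (hM.1.1 hf)
  have : Nonempty (Sym2 V) := ⟨f⟩
  choose! φ hφC hφf hφE hφcov hφmeet using
    fun C hC => hM.exists_covered_edge_meeting hf (h𝒞 C hC).1 (h𝒞 C hC).2
  have hmaps : ∀ C ∈ 𝒞, φ C ∈ (↑({g ∈ S | ∃ v ∈ f, v ∈ g} : Finset _) : Set (Sym2 V)) := by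
    intro C hC
    obtain ⟨v, hvf, hvg⟩ := hφmeet C hC
    have hφM : φ C ∉ M := fun hM' => hφf C hC (hM.1.eq_of_mem_of_mem hM' hf hvg hvf)
    simpa using ⟨hS _ (hφE C hC) hφM (hφcov C hC), v, hvf, hvg⟩
  have hinj : Set.InjOn φ 𝒞 := fun C hC C' hC' heq => by
    by_contra hne
    have hmem : φ C ∈ C ∩ C' := ⟨hφC C hC, heq ▸ hφC C' hC'⟩
    rw [hinter C hC C' hC' hne] at hmem
    exact hφf C hC hmem
  calc α ≤ 𝒞.ncard := hα
    _ ≤ _ := Set.ncard_le_ncard_of_injOn φ hmaps hinj (Finset.finite_toSet _)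
    _ = _ := Set.ncard_coe_finset _

theorem IsMaximalMatching.two_mul_card_edgeFinset_add_le [Fintype V] [DecidableEq V]
    [DecidableRel G.Adj] (hG : IsHeavy G α) (hΔ : ∀ v, G.degree v ≤ Δ) {M : Finset (Sym2 V)}
    (hM : IsMaximalMatching G ↑M) :
    2 * #G.edgeFinset + (α + 2) * #M ≤ 4 * Δ * #M := by
  set U := M.biUnion Sym2.toFinset
  have hmemU : ∀ v, v ∈ U ↔ Covered (M : Set (Sym2 V)) v := by simp [U, Covered]
  have hU : G.IsVertexCover ↑U := Set.ext hmemU ▸ hM.isVertexCover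
  set T := {e ∈ G.edgeFinset | e.toFinset ⊆ U}
  have hET : #G.edgeFinset + #T ≤ Δ * #U := hU.card_edgeFinset_add_card_filter_subset_le hΔ
  have hUM : #U ≤ #M * 2 := card_biUnion_le_card_mul _ _ _ fun e _ => e.card_toFinset_le_two
  have hMT : M ⊆ T := fun f hf =>
    mem_filter.mpr ⟨G.mem_edgeFinset.mpr (hM.1.1 hf), fun v hv => mem_biUnion.mpr ⟨f, hf, hv⟩⟩
  have hTM : #M * α ≤ #(T \ M) * 2 :=
    hM.1.card_mul_le_card_mul_two fun f hf => hG.le_card_filter_meeting hM hf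
      fun g hg hgM hcov => mem_sdiff.mpr ⟨mem_filter.mpr ⟨G.mem_edgeFinset.mpr hg,
        fun v hv => (hmemU v).mpr (hcov v (Sym2.mem_toFinset.mp hv))⟩, hgM⟩
  have hT : #(T \ M) + #M = #T := card_sdiff_add_card_eq_card hMT
  have hΔU : Δ * #U ≤ Δ * (#M * 2) := Nat.mul_le_mul_left Δ hUM
  linarith

end

theorem stmt0_general {V : Type*} [Fintype V] (G : SimpleGraph V) [DecidableRel G.Adj]
    (α : ℕ) (hheavy : IsHeavy G α)
    (d : ℝ) (hd : d = 2 * (G.edgeSet.ncard : ℝ) / (Fintype.card V))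
    (Δ : ℕ) (hΔub : ∀ v, G.degree v ≤ Δ)
    (M : Set (Sym2 V)) (hM : IsMaximalMatching G M) :
    d * (Fintype.card V) / (4 * (Δ : ℝ) - (α : ℝ) - 2) ≤ (M.ncard : ℝ) := by
  classical
  obtain ⟨M, rfl⟩ := M.toFinite.exists_finset_coe
  have key : 2 * (#G.edgeFinset : ℝ) + (α + 2) * #M ≤ 4 * Δ * #M := by
    exact_mod_cast hM.two_mul_card_edgeFinset_add_le hheavy hΔub
  rw [Set.ncard_coe_finset]
  rw [← G.coe_edgeFinset, Set.ncard_coe_finset] at hd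
  have hdV : d * Fintype.card V = 2 * #G.edgeFinset := by
    refine hd ▸ div_mul_cancel_of_imp fun hV => ?_
    have : IsEmpty V := Fintype.card_eq_zero_iff.mp (by exact_mod_cast hV)
    simp [SimpleGraph.eq_bot_iff_forall_not_adj]
  rcases le_or_gt (4 * (Δ : ℝ) - α - 2) 0 with hD | hD
  · exact (div_nonpos_of_nonneg_of_nonpos (hdV ▸ by positivity) hD).trans (Nat.cast_nonneg _)
  · rw [div_le_iff₀ hD]
    linarith

/-- if `G` is `α`-heavy with average degree `d` and maximum degree `Δ`, then
every maximal matching of `G` has cardinality at least `d·|V|/(4Δ − α − 2)`. -/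
theorem stmt0 {V : Type*} [Fintype V] (G : SimpleGraph V) [DecidableRel G.Adj]
    (α : ℕ) (hα : 0 < α) (hheavy : IsHeavy G α)
    (d : ℝ) (hd : d = 2 * (G.edgeSet.ncard : ℝ) / (Fintype.card V))
    (Δ : ℕ) (hΔub : ∀ v, G.degree v ≤ Δ) (hΔmem : ∃ v, G.degree v = Δ)
    (M : Set (Sym2 V)) (hM : IsMaximalMatching G M) :
    d * (Fintype.card V) / (4 * (Δ : ℝ) - (α : ℝ) - 2) ≤ (M.ncard : ℝ) :=
  stmt0_general G α hheavy d hd Δ hΔub M hM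
end

section
/- Every maximal matching of the n-dimensional hypercube graph Q_n has at least 2^n · n/(3n−1) edges. -/
/-!
The vertices `U` left uncovered by a maximal matching `M` form an independent set, so each of
the `n * |U|` pairs `(u, i)` with `u ∈ U` leads, by flipping bit `i`, to a vertex covered by `M`.
A matching edge `{x, x + e_j}` is reached by at most `n - 1` of these pairs: direction `j` would
make `u` itself covered, and for `i ≠ j` the two candidates `x + e_i` and `x + e_j + e_i` are
adjacent, so at most one of them is uncovered. Hence `n * |U| ≤ (n - 1) * |M|`, which together
with `2 * |M| + |U| = 2 ^ n` gives `n * 2 ^ n ≤ (3 * n - 1) * |M|`.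
-/

open Finset
open scoped Classical

section Matching

variable {V : Type*} {G : SimpleGraph V} {M : Set (Sym2 V)}

theorem IsMatching.insert (hM : IsMatching G M) {u w : V} (h : G.Adj u w)
    (hu : ¬Covered M u) (hw : ¬Covered M w) : IsMatching G (insert s(u, w) M) := by
  have hfresh : ∀ f ∈ M, ∀ v ∈ s(u, w), v ∉ f := by
    intro f hf v hv hvf
    rcases Sym2.mem_iff.1 hv with rfl | rfl
    · exact hu ⟨f, hf, hvf⟩
    · exact hw ⟨f, hf, hvf⟩
  refine ⟨Set.insert_subset h hM.1, ?_⟩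
  rintro e (rfl | he) f (rfl | hf) hef v hve
  · exact absurd rfl hef
  · exact hfresh f hf v hve
  · exact fun hvf => hfresh e he v hvf hve
  · exact hM.2 e he f hf hef v hve

theorem IsMaximalMatching.not_adj_of_not_covered (hM : IsMaximalMatching G M) {u w : V}
    (hu : ¬Covered M u) (hw : ¬Covered M w) : ¬G.Adj u w := by
  intro h
  have hnew : s(u, w) ∉ M := fun hmem => hu ⟨_, hmem, Sym2.mem_mk_left _ _⟩
  have := hM.2 _ (hM.1.insert h hu hw) (Set.subset_insert _ _)
  exact hnew (this ▸ Set.mem_insert _ _)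

theorem IsMatching.card_covered [Fintype V] (hM : IsMatching G M) :
    #{v | Covered M v} = 2 * M.ncard := by
  have hcov : ({v | Covered M v} : Finset V) = M.toFinset.biUnion Sym2.toFinset := by
    ext v
    simp only [mem_filter, mem_univ, true_and, mem_biUnion, Set.mem_toFinset, Sym2.mem_toFinset]
    rfl
  have hdisj : (M.toFinset : Set (Sym2 V)).PairwiseDisjoint Sym2.toFinset := by
    intro e he f hf hef
    rw [Function.onFun, Finset.disjoint_left]
    intro v hve hvf
    exact hM.2 e (by simpa using he) f (by simpa using hf) hef v
      (by simpa using hve) (by simpa using hvf)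
  have htwo : ∀ e ∈ M.toFinset, #e.toFinset = 2 := fun e he =>
    Sym2.card_toFinset_of_not_isDiag e
      (G.not_isDiag_of_mem_edgeSet (hM.1 (Set.mem_toFinset.1 he)))
  rw [hcov, card_biUnion hdisj, sum_congr rfl htwo, sum_const, smul_eq_mul,
    Set.ncard_eq_toFinset_card', mul_comm]

theorem IsMatching.two_mul_ncard_add_card_uncovered [Fintype V] (hM : IsMatching G M) :
    2 * M.ncard + #{v | ¬Covered M v} = Fintype.card V := by
  rw [← hM.card_covered, card_filter_add_card_filter_not, card_univ]

end Matching

section Hypercube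

variable {n : ℕ}

def flipBit (x : Fin n → Bool) (i : Fin n) : Fin n → Bool :=
  Function.update x i (!x i)

@[simp]
theorem flipBit_flipBit (x : Fin n → Bool) (i : Fin n) : flipBit (flipBit x i) i = x := by
  simp [flipBit]

theorem flipBit_eq_iff {x y : Fin n → Bool} {i : Fin n} : flipBit x i = y ↔ x = flipBit y i := by
  constructor <;> rintro rfl <;> simp

theorem flipBit_comm (x : Fin n → Bool) (i j : Fin n) :
    flipBit (flipBit x i) j = flipBit (flipBit x j) i := by
  rcases eq_or_ne i j with rfl | hij
  · rfl
  · simp only [flipBit, Function.update_of_ne hij, Function.update_of_ne hij.symm]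
    exact Function.update_comm hij _ _ _

theorem flipBit_mem_iff {u x y : Fin n → Bool} {i : Fin n} :
    flipBit u i ∈ s(x, y) ↔ u ∈ s(flipBit x i, flipBit y i) := by
  simp only [Sym2.mem_iff, flipBit_eq_iff]

theorem existsUnique_ne_iff_eq_flipBit {x y : Fin n → Bool} :
    (∃! i, x i ≠ y i) ↔ ∃ i, y = flipBit x i := by
  constructor
  · rintro ⟨i, hi, hunique⟩
    refine ⟨i, funext fun j => ?_⟩
    rcases eq_or_ne j i with rfl | hji
    · simpa [flipBit] using Bool.eq_not.2 hi.symm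
    · simpa [flipBit, hji] using (not_imp_comm.1 (hunique j) hji).symm
  · rintro ⟨i, rfl⟩
    refine ⟨i, by simp [flipBit], fun j hj => ?_⟩
    by_contra hji
    simp [flipBit, hji] at hj

theorem hypercube_adj_iff {x y : Fin n → Bool} :
    (hypercube n).Adj x y ↔ ∃ i, y = flipBit x i := by
  have hsymm : (∃! i, y i ≠ x i) ↔ ∃! i, x i ≠ y i := by simp only [ne_comm]
  rw [hypercube, SimpleGraph.fromRel_adj, hsymm, or_self, existsUnique_ne_iff_eq_flipBit]
  refine and_iff_right_of_imp ?_
  rintro ⟨i, rfl⟩ h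
  simpa [flipBit] using congrFun h i

theorem hypercube_adj_flipBit (x : Fin n → Bool) (i : Fin n) : (hypercube n).Adj x (flipBit x i) :=
  hypercube_adj_iff.2 ⟨i, rfl⟩

variable {M : Set (Sym2 (Fin n → Bool))}

theorem IsMaximalMatching.hypercube_card_fiber_le (hM : IsMaximalMatching (hypercube n) M)
    {e : Sym2 (Fin n → Bool)} (he : e ∈ M) :
    #{p : (Fin n → Bool) × Fin n | ¬Covered M p.1 ∧ flipBit p.1 p.2 ∈ e} ≤ n - 1 := by
  obtain ⟨x, j, rfl⟩ : ∃ x j, e = s(x, flipBit x j) := by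
    induction e using Sym2.ind with
    | _ x y =>
      obtain ⟨j, hj⟩ := hypercube_adj_iff.1 (hM.1.1 he : (hypercube n).Adj x y)
      dsimp only at hj
      exact ⟨x, j, by rw [hj]⟩
  set fiber : Finset ((Fin n → Bool) × Fin n) :=
    {p | ¬Covered M p.1 ∧ flipBit p.1 p.2 ∈ s(x, flipBit x j)}
  have hdir : ∀ p ∈ fiber, p.2 ≠ j := by
    rintro ⟨u, i⟩ hp (rfl : i = j)
    simp only [fiber, mem_filter, mem_univ, true_and, flipBit_mem_iff, flipBit_flipBit] at hp
    exact hp.1 ⟨_, he, by rw [Sym2.eq_swap]; exact hp.2⟩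
  have hinj : Set.InjOn Prod.snd (fiber : Set ((Fin n → Bool) × Fin n)) := by
    rintro ⟨u, i⟩ hp ⟨u', i'⟩ hp' (rfl : i = i')
    simp only [fiber, mem_coe, mem_filter, mem_univ, true_and, flipBit_mem_iff,
      flipBit_comm x j i] at hp hp'
    refine Prod.ext ?_ rfl
    by_contra hne
    have hedge := (hypercube n).mem_edgeSet.2 (hypercube_adj_flipBit (flipBit x i) j)
    rw [(Sym2.mem_and_mem_iff hne).1 ⟨hp.2, hp'.2⟩] at hedge
    exact hM.not_adj_of_not_covered hp.1 hp'.1 hedge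
  calc _ ≤ #(univ.erase j) :=
        card_le_card_of_injOn Prod.snd (fun p hp => mem_erase.2 ⟨hdir p hp, mem_univ _⟩) hinj
    _ = n - 1 := by simp

theorem IsMaximalMatching.hypercube_mul_card_uncovered_le
    (hM : IsMaximalMatching (hypercube n) M) :
    n * #{v | ¬Covered M v} ≤ (n - 1) * M.ncard := by
  set U : Finset (Fin n → Bool) := {v | ¬Covered M v}
  have hsub : U ×ˢ (univ : Finset (Fin n)) ⊆
      M.toFinset.biUnion fun e => {p | ¬Covered M p.1 ∧ flipBit p.1 p.2 ∈ e} := by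
    rintro ⟨u, i⟩ hp
    have hu : ¬Covered M u := by simpa [U] using (mem_product.1 hp).1
    obtain ⟨e, he, hflip⟩ : Covered M (flipBit u i) := not_not.1 fun hw =>
      hM.not_adj_of_not_covered hu hw (hypercube_adj_flipBit u i)
    exact mem_biUnion.2 ⟨e, Set.mem_toFinset.2 he, by simp [hu, hflip]⟩
  calc n * #U = #(U ×ˢ (univ : Finset (Fin n))) := by
        rw [card_product, card_univ, Fintype.card_fin, mul_comm]
    _ ≤ #M.toFinset * (n - 1) := (card_le_card hsub).trans <|
        card_biUnion_le_card_mul _ _ _ fun e he =>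
          hM.hypercube_card_fiber_le (Set.mem_toFinset.1 he)
    _ = (n - 1) * M.ncard := by rw [Set.ncard_eq_toFinset_card', mul_comm]

end Hypercube

/-- every maximal matching of `Q_n` has at least `2^n·n/(3n−1)` edges. -/
theorem stmt1 (n : ℕ) (M : Set (Sym2 (Fin n → Bool)))
    (hM : IsMaximalMatching (hypercube n) M) :
    (2 : ℝ) ^ n * n / (3 * (n : ℝ) - 1) ≤ (M.ncard : ℝ) := by
  obtain rfl | hn := Nat.eq_zero_or_pos n
  · simp
  have hsplit : 2 * (M.ncard : ℝ) + #{v | ¬Covered M v} = 2 ^ n := by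
    exact_mod_cast (by simpa using hM.1.two_mul_ncard_add_card_uncovered)
  have hcount : (n : ℝ) * #{v | ¬Covered M v} ≤ (n - 1) * M.ncard := by
    simpa [Nat.cast_sub hn] using (Nat.cast_le (α := ℝ)).2 hM.hypercube_mul_card_uncovered_le
  have hn' : (1 : ℝ) ≤ n := by exact_mod_cast hn
  rw [div_le_iff₀ (by linarith)]
  linear_combination hcount - (n : ℝ) * hsplit
end

section
/- The permutahedron graph Π_n is (n−4)-heavy: for every edge e of Π_n there exist at least n−4 induced 4-cycles containing e such that e is the only common edge of any two of them. -/
/-!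
View `Π_n` as the Cayley graph of `S_n` with respect to the adjacent transpositions `S`. If
`a, b ∈ S` commute, `a ≠ b`, `a * b ≠ 1` and `a * b, a⁻¹ * b ∉ S`, then `x, x a, x a b, x b` is an
induced 4-cycle through the edge `{x, x a}`, and two such squares built on the same `a` but
different `b`, `b'` meet only in the vertices `x, x a`, hence only in that edge. For `a = τ_i` every
`b = τ_k` with `|k - i| ≥ 2` qualifies: `τ_i τ_k` has cycle type `(2, 2)`, so it is neither `1`
nor a transposition. All but at most three of the `n - 1` indices `k` are that far from `i`.
-/

open Equiv Finset

namespace CayleyGraph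

variable {G : Type*} [Group G]

def SpansInducedSquare (S : Set G) (a b : G) : Prop :=
  a ∈ S ∧ b ∈ S ∧ Commute a b ∧ a ≠ b ∧ a * b ≠ 1 ∧ a * b ∉ S ∧ a⁻¹ * b ∉ S

def square (x a b : G) : Set (Sym2 G) :=
  {s(x, x * a), s(x * a, x * (a * b)), s(x * (a * b), x * b), s(x * b, x)}

variable {Γ : SimpleGraph G} {S : Set G}

lemma one_notMem_of_adj_iff (hΓ : ∀ x y, Γ.Adj x y ↔ x⁻¹ * y ∈ S) : (1 : G) ∉ S := by
  simpa using (hΓ 1 1).not.mp (Γ.loopless.irrefl 1)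

lemma isInduced4Cycle_square (hΓ : ∀ x y, Γ.Adj x y ↔ x⁻¹ * y ∈ S) (x : G) {a b : G}
    (h : SpansInducedSquare S a b) : IsInduced4Cycle Γ (square x a b) := by
  obtain ⟨ha, hb, hcomm, hne, hab1, habS, hinvS⟩ := h
  refine ⟨x, x * a, x * (a * b), x * b, ?_, ?_, ?_, ?_, ?_, ?_, ?_, ?_, rfl⟩
  · simpa using hab1
  · simpa using hne
  · simpa [hΓ] using ha
  · simpa [hΓ, mul_assoc] using hb
  · refine SimpleGraph.Adj.symm ((hΓ _ _).mpr ?_)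
    rwa [hcomm.eq, mul_inv_rev, ← mul_assoc, inv_mul_cancel_right, inv_mul_cancel_left]
  · exact SimpleGraph.Adj.symm (by simpa [hΓ] using hb)
  · simpa [hΓ] using habS
  · simpa [hΓ, mul_assoc] using hinvS

lemma square_inter_square (hΓ : ∀ x y, Γ.Adj x y ↔ x⁻¹ * y ∈ S) (x : G) {a b b' : G}
    (h : SpansInducedSquare S a b) (h' : SpansInducedSquare S a b') (hbb' : b ≠ b') :
    square x a b ∩ square x a b' = {s(x, x * a)} := by
  have hS1 := one_notMem_of_adj_iff hΓ
  obtain ⟨ha, hb, -, hab, hab1, habS, -⟩ := h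
  obtain ⟨-, hb', -, hab', hab'1, hab'S, -⟩ := h'
  have : a ≠ 1 := by rintro rfl; exact hS1 ha
  have : b ≠ 1 := by rintro rfl; exact hS1 hb
  have : b' ≠ 1 := by rintro rfl; exact hS1 hb'
  have : a * b ≠ b' := by rintro rfl; exact habS hb'
  have : a * b' ≠ b := by rintro rfl; exact hab'S hb
  -- the two squares share only the vertices `x` and `x * a`
  ext e
  simp only [square, Set.mem_inter_iff, Set.mem_insert_iff, Set.mem_singleton_iff]
  constructor
  · rintro ⟨h1 | h1 | h1 | h1, h2 | h2 | h2 | h2⟩ <;> subst h1 <;> simp_all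
  · rintro rfl
    simp

lemma exists_squares_through_edge (hΓ : ∀ x y, Γ.Adj x y ↔ x⁻¹ * y ∈ S) (x a : G)
    (T : Finset G) (hT : ∀ b ∈ T, SpansInducedSquare S a b) :
    ∃ 𝒞 : Set (Set (Sym2 G)), #T ≤ 𝒞.ncard ∧
      (∀ C ∈ 𝒞, IsInduced4Cycle Γ C ∧ s(x, x * a) ∈ C) ∧
      ∀ C ∈ 𝒞, ∀ C' ∈ 𝒞, C ≠ C' → C ∩ C' = {s(x, x * a)} := by
  have hinter {b b'} (hb : b ∈ T) (hb' : b' ∈ T) (hbb' : b ≠ b') :=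
    square_inter_square hΓ x (hT b hb) (hT b' hb') hbb'
  have hinj : Set.InjOn (square x a) T := by
    intro b hb b' hb' heq
    by_contra hbb'
    have hmem : s(x * b, x) ∈ square x a b ∩ square x a b' := by
      rw [← heq, Set.inter_self]; simp [square]
    obtain ⟨-, hbS, -, hab, -⟩ := hT b hb
    obtain ⟨hb1, -⟩ | ⟨hba, -⟩ := Sym2.eq_iff.mp ((hinter hb hb' hbb').subset hmem)
    · exact one_notMem_of_adj_iff hΓ (mul_eq_left.mp hb1 ▸ hbS)
    · exact hab (mul_left_cancel hba).symm
  refine ⟨square x a '' T, ?_, ?_, ?_⟩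
  · rw [hinj.ncard_image, Set.ncard_coe_finset]
  · rintro _ ⟨b, hb, rfl⟩
    exact ⟨isInduced4Cycle_square hΓ x (hT b hb), by simp [square]⟩
  · rintro _ ⟨b, hb, rfl⟩ _ ⟨b', hb', rfl⟩ hne
    exact hinter hb hb' (ne_of_apply_ne _ hne)

lemma isHeavy_of_adj_iff (hΓ : ∀ x y, Γ.Adj x y ↔ x⁻¹ * y ∈ S) {α : ℕ}
    (hS : ∀ a ∈ S, ∃ T : Finset G, α ≤ #T ∧ ∀ b ∈ T, SpansInducedSquare S a b) :
    IsHeavy Γ α := by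
  intro e he
  induction e using Sym2.ind with
  | _ x y =>
    obtain ⟨T, hαT, hT⟩ := hS _ ((hΓ x y).mp he)
    obtain ⟨𝒞, hcard, hcyc, hinter⟩ := exists_squares_through_edge hΓ x _ T hT
    rw [mul_inv_cancel_left] at hcyc hinter
    exact ⟨𝒞, hαT.trans hcard, hcyc, hinter⟩

end CayleyGraph

open CayleyGraph

namespace Permutahedron

variable {n : ℕ}

-- `adjSwap k` is the paper's `τ_{k+1}`: positions are `0`-indexed.
def adjSwap (k : Fin (n - 1)) : Perm (Fin n) :=
  swap ⟨k, by omega⟩ ⟨k + 1, by omega⟩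

def distantFrom (i : Fin (n - 1)) : Finset (Fin (n - 1)) :=
  {k | (k : ℕ) + 1 < i ∨ (i : ℕ) + 1 < k}

lemma isSwap_adjSwap (k : Fin (n - 1)) : (adjSwap k).IsSwap :=
  ⟨_, _, by simp [Fin.ext_iff], rfl⟩

lemma mem_range_adjSwap {w : Perm (Fin n)} :
    w ∈ Set.range adjSwap ↔ ∃ i j : Fin n, (i : ℕ) + 1 = j ∧ w = swap i j := by
  constructor
  · rintro ⟨k, rfl⟩
    exact ⟨_, _, rfl, rfl⟩
  · rintro ⟨i, ⟨j, hj⟩, hij, rfl⟩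
    subst hij
    exact ⟨⟨i, by omega⟩, rfl⟩

lemma adj_iff (σ π : Perm (Fin n)) :
    (permutahedron n).Adj σ π ↔ σ⁻¹ * π ∈ Set.range adjSwap := by
  rw [permutahedron, SimpleGraph.fromRel_adj, mem_range_adjSwap]
  constructor
  · rintro ⟨-, ⟨i, j, hij, rfl⟩ | ⟨i, j, hij, rfl⟩⟩
    · exact ⟨i, j, hij, by simp⟩
    · exact ⟨i, j, hij, by simp⟩
  · rintro ⟨i, j, hij, hσπ⟩
    rw [inv_mul_eq_iff_eq_mul] at hσπ
    refine ⟨?_, .inl ⟨i, j, hij, hσπ⟩⟩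
    rintro rfl
    simp only [left_eq_mul, swap_eq_one_iff, Fin.ext_iff] at hσπ
    omega

lemma adjSwap_injective : Function.Injective (adjSwap (n := n)) := by
  intro i k h
  have := congrArg (· ⟨i, by omega⟩) h
  simp only [adjSwap, swap_apply_left, swap_apply_def] at this
  ext
  split_ifs at this <;> simp only [Fin.ext_iff] at * <;> omega

lemma spansInducedSquare_adjSwap {i k : Fin (n - 1)} (hk : k ∈ distantFrom i) :
    SpansInducedSquare (Set.range adjSwap) (adjSwap i) (adjSwap k) := by
  simp only [distantFrom, mem_filter, mem_univ, true_and] at hk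
  have hnodup :
      [(⟨i, by omega⟩ : Fin n), ⟨i + 1, by omega⟩, ⟨k, by omega⟩, ⟨k + 1, by omega⟩].Nodup := by
    simp only [List.nodup_cons, List.mem_cons, List.not_mem_nil, List.nodup_nil, Fin.ext_iff,
      or_false, not_false_eq_true, and_true]
    omega
  have hcycleType : (adjSwap i * adjSwap k).cycleType = {2, 2} :=
    Perm.cycleType_swap_mul_swap_of_nodup hnodup
  have hnotMem : adjSwap i * adjSwap k ∉ Set.range adjSwap := by
    rintro ⟨m, hm⟩
    have := Perm.isSwap_iff_cycleType.mp (hm ▸ isSwap_adjSwap m)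
    rw [hcycleType] at this
    simpa using congrArg Multiset.card this
  refine ⟨⟨i, rfl⟩, ⟨k, rfl⟩, (Perm.disjoint_swap_swap hnodup).commute,
    adjSwap_injective.ne (by rintro rfl; omega), ?_, hnotMem, by rwa [adjSwap, swap_inv]⟩
  intro h1
  simp [h1] at hcycleType

lemma card_distantFrom (i : Fin (n - 1)) : n - 4 ≤ #(distantFrom i) := by
  have hnear : #{k : Fin (n - 1) | ¬((k : ℕ) + 1 < i ∨ (i : ℕ) + 1 < k)} ≤ 3 := by
    rw [← card_map Fin.valEmbedding]
    refine (card_le_card (t := ({(i : ℕ) - 1, (i : ℕ), (i : ℕ) + 1} : Finset ℕ)) ?_).trans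
      card_le_three
    simp only [subset_iff, mem_map, mem_filter, mem_univ, true_and, Fin.valEmbedding_apply,
      mem_insert, mem_singleton]
    rintro _ ⟨k, hk, rfl⟩
    omega
  have := card_filter_add_card_filter_not (s := univ)
    (fun k : Fin (n - 1) => (k : ℕ) + 1 < i ∨ (i : ℕ) + 1 < k)
  simp only [card_univ, Fintype.card_fin] at this
  rw [distantFrom]
  omega

end Permutahedron

/-- the permutahedron `Π_n` is `(n−4)`-heavy. -/
theorem stmt3 (n : ℕ) : IsHeavy (permutahedron n) (n - 4) := by
  refine isHeavy_of_adj_iff Permutahedron.adj_iff ?_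
  rintro _ ⟨i, rfl⟩
  refine ⟨(Permutahedron.distantFrom i).image Permutahedron.adjSwap, ?_, ?_⟩
  · rw [card_image_of_injective _ Permutahedron.adjSwap_injective]
    exact Permutahedron.card_distantFrom i
  · simp only [mem_image]
    rintro _ ⟨k, hk, rfl⟩
    exact Permutahedron.spansInducedSquare_adjSwap hk
end

section
/- The permutahedron Π_n admits a maximal matching of cardinality exactly n!/3 (for n ≥ 3). -/
/-!
Colour a permutation `σ` of `Fin (m + 3)` by the number of its inversions that do not lie inside
the first three positions plus the rank of `σ 1` among `σ 0, σ 1, σ 2`, taken mod 3. Permuting the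
first three entries (right multiplication by the subgroup generated by `τ₀, τ₁`) fixes the first
summand, so on each such hexagon of `Π_n` the colour only depends on which of the three entries sits
in the middle, and the three choices give three different colours. Any other `τᵢ` changes the
inversion count by `±1`, and a case check shows that it changes the colour as well. So the colour is
a proper 3-colouring: its zero class `U` is independent, and since it contains exactly one of
`σ, σc, σc²` for the 3-cycle `c = τ₀τ₁`, `|U| = n!/3`. A permutation `σ ∉ U` has exactly one of its
two hexagon neighbours `στ₀, στ₁` outside `U`; these pairs form a perfect matching of the
complement of `U`, which is therefore a maximal matching with `(n! - n!/3)/2 = n!/3` edges.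
-/

open Equiv Finset

section Matching

variable {V : Type*} {G : SimpleGraph V}

theorem IsMatching.isMaximalMatching {M : Set (Sym2 V)} (hM : IsMatching G M)
    (hcov : ∀ a b, G.Adj a b → Covered M a ∨ Covered M b) : IsMaximalMatching G M := by
  refine ⟨hM, fun M' hM' hMM' => Set.Subset.antisymm ?_ hMM'⟩
  intro e he
  induction e using Sym2.ind with
  | _ a b =>
    have key : ∀ v ∈ s(a, b), Covered M v → s(a, b) ∈ M := by
      rintro v hv ⟨f, hf, hvf⟩
      by_contra hne
      exact hM'.2 _ he f (hMM' hf) (ne_of_mem_of_not_mem hf hne).symm v hv hvf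
    rcases hcov a b (hM'.1 he) with ha | hb
    · exact key a (Sym2.mem_mk_left a b) ha
    · exact key b (Sym2.mem_mk_right a b) hb

variable [DecidableEq V] {S : Finset V} {f : V → V}

theorem exists_isMaximalMatching_two_mul_ncard (hS : ∀ v ∈ S, f v ∈ S)
    (hff : ∀ v ∈ S, f (f v) = v) (hadj : ∀ v ∈ S, G.Adj v (f v))
    (hcov : ∀ a b, G.Adj a b → a ∈ S ∨ b ∈ S) :
    ∃ M : Set (Sym2 V), IsMaximalMatching G M ∧ 2 * M.ncard = #S := by
  set M := S.image fun v => s(v, f v)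
  have mem_M : ∀ e ∈ M, ∀ v ∈ e, v ∈ S ∧ e = s(v, f v) := by
    simp only [M, mem_image]
    rintro _ ⟨u, hu, rfl⟩ v hv
    rcases Sym2.mem_iff.1 hv with rfl | rfl
    · exact ⟨hu, rfl⟩
    · exact ⟨hS u hu, by rw [hff u hu, Sym2.eq_swap]⟩
  have hmatch : IsMatching G (M : Set (Sym2 V)) := by
    refine ⟨?_, fun e he e' he' hne v hv hv' => hne ?_⟩
    · simp only [Set.subset_def, mem_coe, M, mem_image]
      rintro _ ⟨v, hv, rfl⟩
      exact hadj v hv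
    · rw [(mem_M e he v hv).2, (mem_M e' he' v hv').2]
  refine ⟨M, hmatch.isMaximalMatching fun a b hab => ?_, ?_⟩
  · refine (hcov a b hab).imp (fun ha => ?_) (fun hb => ?_)
    · exact ⟨s(a, f a), mem_image_of_mem _ ha, Sym2.mem_mk_left _ _⟩
    · exact ⟨s(b, f b), mem_image_of_mem _ hb, Sym2.mem_mk_left _ _⟩
  · have fiber : ∀ e ∈ M, #{v ∈ S | s(v, f v) = e} = 2 := by
      intro e he
      obtain ⟨u, hu, rfl⟩ := mem_image.1 he
      rw [card_eq_two]
      refine ⟨u, f u, (hadj u hu).ne, ?_⟩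
      ext v
      simp only [mem_filter, mem_insert, mem_singleton]
      constructor
      · rintro ⟨-, hv⟩
        exact Sym2.mem_iff.1 (hv ▸ Sym2.mem_mk_left v (f v))
      · rintro (rfl | rfl)
        · exact ⟨hu, rfl⟩
        · exact ⟨hS u hu, by rw [hff u hu, Sym2.eq_swap]⟩
    rw [Set.ncard_coe_finset, card_eq_sum_card_image (fun v => s(v, f v)) S,
      sum_congr rfl fiber, sum_const, smul_eq_mul, mul_comm]

end Matching

section Group

variable {H : Type*} [Group H]

theorem apply_mul_eq_of_mem_closure {X : Type*} {F : H → X} {s : Set H}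
    (hs : ∀ x ∈ s, ∀ g, F (g * x) = F g) {x : H} (hx : x ∈ Subgroup.closure s) (g : H) :
    F (g * x) = F g := by
  induction hx using Subgroup.closure_induction generalizing g with
  | mem x hx => exact hs x hx g
  | one => rw [mul_one]
  | mul x y _ _ ihx ihy => rw [← mul_assoc, ihy, ihx]
  | inv x _ ih => rw [← ih (g * x⁻¹), inv_mul_cancel_right]

theorem card_mul_card_filter_eq_card [Fintype H] {α : Type*} [DecidableEq α] {K : ℕ}
    (φ : H → α) (c : H) (hφ : ∀ g, Function.Bijective fun k : Fin K => φ (g * c ^ (k : ℕ)))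
    (a : α) : K * #{g | φ g = a} = Fintype.card H := by
  have hfiber : ∀ g, #{k : Fin K | φ (g * c ^ (k : ℕ)) = a} = 1 := by
    intro g
    obtain ⟨k₀, hk₀⟩ := (hφ g).2 a
    rw [card_eq_one]
    exact ⟨k₀, by ext k; simpa [← hk₀] using (hφ g).1.eq_iff⟩
  have hshift : ∀ k : ℕ, #{g | φ (g * c ^ k) = a} = #{g | φ g = a} := fun k =>
    card_equiv (Equiv.mulRight (c ^ k)) (by simp)
  calc K * #{g | φ g = a} = ∑ k : Fin K, #{g | φ (g * c ^ (k : ℕ)) = a} := by simp [hshift]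
    _ = ∑ g, #{k : Fin K | φ (g * c ^ (k : ℕ)) = a} := by
      simp only [card_filter]
      exact sum_comm
    _ = Fintype.card H := by simp [hfiber]

end Group

namespace Permutahedron

section Inversions

variable {n : ℕ}

def inversions (σ : Perm (Fin n)) : Finset (Fin n × Fin n) :=
  {p | p.1 < p.2 ∧ σ p.2 < σ p.1}

def invCount (σ : Perm (Fin n)) : ℕ := #(inversions σ)

theorem mem_inversions {σ : Perm (Fin n)} {a b : Fin n} :
    (a, b) ∈ inversions σ ↔ a < b ∧ σ b < σ a := by
  rw [inversions, mem_filter_univ]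

theorem swap_apply_lt_swap_apply_iff {i j a b : Fin n} (hij : (i : ℕ) + 1 = j)
    (h : ¬(a = i ∧ b = j)) (h' : ¬(a = j ∧ b = i)) : swap i j a < swap i j b ↔ a < b := by
  simp only [swap_apply_def, Fin.ext_iff, Fin.lt_def] at *
  split_ifs <;> omega

theorem inversions_mul_swap {σ : Perm (Fin n)} {i j : Fin n} (hij : (i : ℕ) + 1 = j)
    (h : σ i < σ j) :
    inversions (σ * swap i j) =
      insert (i, j) ((inversions σ).map (prodCongr (swap i j) (swap i j)).toEmbedding) := by
  ext ⟨a, b⟩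
  simp only [mem_inversions, mem_insert, mem_map_equiv, Prod.mk.injEq,
    prodCongr_symm, symm_swap, prodCongr_apply, Prod.map_apply, Perm.mul_apply]
  by_cases hab : a = i ∧ b = j
  · obtain ⟨rfl, rfl⟩ := hab
    simp [h, Fin.lt_def.2 (by omega : (a : ℕ) < b)]
  by_cases hba : a = j ∧ b = i
  · obtain ⟨rfl, rfl⟩ := hba
    have hba : b < a := Fin.lt_def.2 (by omega)
    simp [h.not_gt, hba.not_gt, hba.ne']
  rw [swap_apply_lt_swap_apply_iff hij hab hba]
  tauto

theorem invCount_mul_swap_of_lt {σ : Perm (Fin n)} {i j : Fin n} (hij : (i : ℕ) + 1 = j)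
    (h : σ i < σ j) : invCount (σ * swap i j) = invCount σ + 1 := by
  rw [invCount, inversions_mul_swap hij h, card_insert_of_notMem, card_map, invCount]
  simp [mem_inversions, (Fin.lt_def.2 (by omega : (i : ℕ) < j)).not_gt]

theorem invCount_mul_swap (σ : Perm (Fin n)) {i j : Fin n} (hij : (i : ℕ) + 1 = j) :
    (invCount (σ * swap i j) : ℤ) = invCount σ + if σ i < σ j then 1 else -1 := by
  split_ifs with h
  · simp [invCount_mul_swap_of_lt hij h]
  · have hne : σ i ≠ σ j := σ.injective.ne (Fin.ne_of_val_ne (by omega))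
    have h' : (σ * swap i j) i < (σ * swap i j) j := by
      simpa using lt_of_le_of_ne (not_lt.1 h) hne.symm
    have := invCount_mul_swap_of_lt hij h'
    rw [mul_assoc, swap_mul_self, mul_one] at this
    omega

theorem val_apply_ne (σ : Perm (Fin n)) {a b : Fin n} (h : a ≠ b) : (σ a : ℕ) ≠ σ b :=
  Fin.val_injective.ne (σ.injective.ne h)

theorem adj_mul_swap (σ : Perm (Fin n)) {i j : Fin n} (hij : (i : ℕ) + 1 = j) :
    (permutahedron n).Adj σ (σ * swap i j) := by
  refine (SimpleGraph.fromRel_adj _ _ _).2 ⟨?_, Or.inl ⟨i, j, hij, rfl⟩⟩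
  rw [ne_eq, eq_comm, mul_eq_left, swap_eq_one_iff]
  exact Fin.ne_of_val_ne (by omega)

end Inversions

section Colouring

variable {m : ℕ}

theorem fin_zero_ne_two : (0 : Fin (m + 3)) ≠ 2 := Fin.ne_of_val_ne (by rw [Fin.val_two]; simp)

theorem fin_one_ne_two : (1 : Fin (m + 3)) ≠ 2 := Fin.ne_of_val_ne (by rw [Fin.val_two]; simp)

def inv3 (σ : Perm (Fin (m + 3))) : ℕ :=
  (if σ 1 < σ 0 then 1 else 0) + (if σ 2 < σ 0 then 1 else 0) + (if σ 2 < σ 1 then 1 else 0)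

def outerInvCount (σ : Perm (Fin (m + 3))) : ℤ := invCount σ - inv3 σ

def rank3 (σ : Perm (Fin (m + 3))) (x : Fin (m + 3)) : ℕ :=
  (if σ 0 < x then 1 else 0) + (if σ 1 < x then 1 else 0) + (if σ 2 < x then 1 else 0)

variable (m) in
def hexagonGroup : Subgroup (Perm (Fin (m + 3))) := Subgroup.closure {swap 0 1, swap 1 2}

/-- The colour of the vertex of the hexagon `σ * hexagonGroup m` whose middle entry is `σ k`. -/
def hexagonColour (σ : Perm (Fin (m + 3))) (k : Fin (m + 3)) : ZMod 3 :=
  ((outerInvCount σ + rank3 σ (σ k) : ℤ) : ZMod 3)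

def colour (σ : Perm (Fin (m + 3))) : ZMod 3 := hexagonColour σ 1

theorem swap_zero_one_mem_hexagonGroup : swap 0 1 ∈ hexagonGroup m :=
  Subgroup.subset_closure (by simp)

theorem swap_one_two_mem_hexagonGroup : swap 1 2 ∈ hexagonGroup m :=
  Subgroup.subset_closure (by simp)

theorem outerInvCount_mul_of_mem (σ : Perm (Fin (m + 3))) {π : Perm (Fin (m + 3))}
    (hπ : π ∈ hexagonGroup m) : outerInvCount (σ * π) = outerInvCount σ := by
  refine apply_mul_eq_of_mem_closure ?_ hπ σ
  rintro _ (rfl | rfl) τ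
  all_goals
    have h01 := val_apply_ne τ Fin.zero_ne_one
    have h02 := val_apply_ne τ fin_zero_ne_two
    have h12 := val_apply_ne τ fin_one_ne_two
  · rw [outerInvCount, outerInvCount, invCount_mul_swap τ (by simp)]
    simp only [inv3, Perm.mul_apply, swap_apply_left, swap_apply_right,
      swap_apply_of_ne_of_ne fin_zero_ne_two.symm fin_one_ne_two.symm, Fin.lt_def]
    push_cast
    split_ifs <;> omega
  · rw [outerInvCount, outerInvCount, invCount_mul_swap τ (by rw [Fin.val_two]; simp)]
    simp only [inv3, Perm.mul_apply, swap_apply_left, swap_apply_right,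
      swap_apply_of_ne_of_ne Fin.zero_ne_one fin_zero_ne_two, Fin.lt_def]
    push_cast
    split_ifs <;> omega

theorem rank3_mul_of_mem (σ : Perm (Fin (m + 3))) {π : Perm (Fin (m + 3))}
    (hπ : π ∈ hexagonGroup m) : rank3 (σ * π) = rank3 σ := by
  refine apply_mul_eq_of_mem_closure ?_ hπ σ
  rintro _ (rfl | rfl) τ <;> funext x
  · simp only [rank3, Perm.mul_apply, swap_apply_left, swap_apply_right,
      swap_apply_of_ne_of_ne fin_zero_ne_two.symm fin_one_ne_two.symm]
    ring
  · simp only [rank3, Perm.mul_apply, swap_apply_left, swap_apply_right,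
      swap_apply_of_ne_of_ne Fin.zero_ne_one fin_zero_ne_two]
    ring

theorem hexagonColour_mul_of_mem (σ : Perm (Fin (m + 3))) {π : Perm (Fin (m + 3))}
    (hπ : π ∈ hexagonGroup m) (k : Fin (m + 3)) :
    hexagonColour (σ * π) k = hexagonColour σ (π k) := by
  rw [hexagonColour, hexagonColour, outerInvCount_mul_of_mem σ hπ, rank3_mul_of_mem σ hπ,
    Perm.mul_apply]

theorem colour_mul_of_mem (σ : Perm (Fin (m + 3))) {π : Perm (Fin (m + 3))}
    (hπ : π ∈ hexagonGroup m) : colour (σ * π) = hexagonColour σ (π 1) :=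
  hexagonColour_mul_of_mem σ hπ 1

theorem hexagonColour_injOn (σ : Perm (Fin (m + 3))) :
    Set.InjOn (hexagonColour σ) {0, 1, 2} := by
  have h01 := val_apply_ne σ Fin.zero_ne_one
  have h02 := val_apply_ne σ fin_zero_ne_two
  have h12 := val_apply_ne σ fin_one_ne_two
  intro a ha b hb hab
  simp only [Set.mem_insert_iff, Set.mem_singleton_iff] at ha hb
  simp only [hexagonColour, ZMod.intCast_eq_intCast_iff'] at hab
  rcases ha with rfl | rfl | rfl <;> rcases hb with rfl | rfl | rfl <;>
    first
    | rfl
    | (simp only [rank3, Fin.lt_def] at hab; push_cast at hab; split_ifs at hab <;> omega)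

theorem colour_mul_swap_two_ne (σ : Perm (Fin (m + 3))) {j : Fin (m + 3)} (hj : (j : ℕ) = 3) :
    colour (σ * swap 2 j) ≠ colour σ := by
  have h0j : (0 : Fin (m + 3)) ≠ j := Fin.ne_of_val_ne (by simp [hj])
  have h1j : (1 : Fin (m + 3)) ≠ j := Fin.ne_of_val_ne (by simp [hj])
  have h2j : (2 : Fin (m + 3)) ≠ j := Fin.ne_of_val_ne (by rw [Fin.val_two]; omega)
  have := val_apply_ne σ Fin.zero_ne_one
  have := val_apply_ne σ fin_zero_ne_two
  have := val_apply_ne σ fin_one_ne_two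
  have := val_apply_ne σ h0j
  have := val_apply_ne σ h1j
  have := val_apply_ne σ h2j
  rw [colour, colour, hexagonColour, hexagonColour, outerInvCount, outerInvCount,
    invCount_mul_swap σ (by rw [Fin.val_two, hj]), ne_eq, ZMod.intCast_eq_intCast_iff']
  simp only [inv3, rank3, Perm.mul_apply, swap_apply_left,
    swap_apply_of_ne_of_ne fin_zero_ne_two h0j, swap_apply_of_ne_of_ne fin_one_ne_two h1j,
    Fin.lt_def]
  push_cast
  split_ifs <;> omega

theorem colour_mul_swap_ne_of_three_le (σ : Perm (Fin (m + 3))) {i j : Fin (m + 3)}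
    (hij : (i : ℕ) + 1 = j) (hi : 3 ≤ (i : ℕ)) : colour (σ * swap i j) ≠ colour σ := by
  have fixes : ∀ k : Fin (m + 3), (k : ℕ) < 3 → (σ * swap i j) k = σ k := fun k hk => by
    rw [Perm.mul_apply,
      swap_apply_of_ne_of_ne (Fin.ne_of_val_ne (by omega)) (Fin.ne_of_val_ne (by omega))]
  have h0 := fixes 0 (by simp)
  have h1 := fixes 1 (by simp)
  have h2 := fixes 2 (by rw [Fin.val_two]; omega)
  rw [colour, colour, hexagonColour, hexagonColour, outerInvCount, outerInvCount,
    invCount_mul_swap σ hij, ne_eq, ZMod.intCast_eq_intCast_iff']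
  simp only [inv3, rank3, h0, h1, h2]
  split_ifs <;> omega

theorem colour_mul_swap_ne (σ : Perm (Fin (m + 3))) {i j : Fin (m + 3)}
    (hij : (i : ℕ) + 1 = j) : colour (σ * swap i j) ≠ colour σ := by
  obtain hi | hi | hi | hi : (i : ℕ) = 0 ∨ (i : ℕ) = 1 ∨ (i : ℕ) = 2 ∨ 3 ≤ (i : ℕ) := by omega
  · obtain rfl : i = 0 := Fin.ext hi
    obtain rfl : j = 1 := Fin.ext (by simp [← hij])
    rw [colour_mul_of_mem σ swap_zero_one_mem_hexagonGroup, swap_apply_right]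
    exact (hexagonColour_injOn σ).ne (by simp) (by simp) Fin.zero_ne_one
  · obtain rfl : i = 1 := Fin.ext (by simp [hi])
    obtain rfl : j = 2 := Fin.ext (by rw [Fin.val_two]; omega)
    rw [colour_mul_of_mem σ swap_one_two_mem_hexagonGroup, swap_apply_left]
    exact (hexagonColour_injOn σ).ne (by simp) (by simp) fin_one_ne_two.symm
  · obtain rfl : i = 2 := Fin.ext (by rw [Fin.val_two, hi])
    exact colour_mul_swap_two_ne σ (by omega)
  · exact colour_mul_swap_ne_of_three_le σ hij hi

theorem colour_ne_of_adj {σ τ : Perm (Fin (m + 3))} (h : (permutahedron (m + 3)).Adj σ τ) :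
    colour σ ≠ colour τ := by
  obtain ⟨-, ⟨i, j, hij, rfl⟩ | ⟨i, j, hij, rfl⟩⟩ := (SimpleGraph.fromRel_adj _ _ _).1 h
  · exact (colour_mul_swap_ne σ hij).symm
  · exact colour_mul_swap_ne τ hij

theorem three_mul_card_colour_eq_zero :
    3 * #{σ : Perm (Fin (m + 3)) | colour σ = 0} = (m + 3).factorial := by
  set c : Perm (Fin (m + 3)) := swap 0 1 * swap 1 2
  have hc : c ∈ hexagonGroup m :=
    mul_mem swap_zero_one_mem_hexagonGroup swap_one_two_mem_hexagonGroup
  have hc1 : c 1 = 2 := by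
    simp [c, swap_apply_of_ne_of_ne fin_zero_ne_two.symm fin_one_ne_two.symm]
  have hc2 : c 2 = 0 := by simp [c]
  have hcard : Fintype.card (Perm (Fin (m + 3))) = (m + 3).factorial := by
    rw [Fintype.card_perm, Fintype.card_fin]
  rw [← hcard]
  refine card_mul_card_filter_eq_card colour c (fun σ => ?_) 0
  rw [Fintype.bijective_iff_injective_and_card, ZMod.card, Fintype.card_fin]
  refine ⟨fun k l hkl => ?_, rfl⟩
  simp only [colour_mul_of_mem σ (pow_mem hc _)] at hkl
  fin_cases k <;> fin_cases l <;> simp [sq, hc1, hc2] at hkl ⊢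
  all_goals
    refine absurd hkl ((hexagonColour_injOn σ).ne ?_ ?_ ?_) <;>
      simp [fin_zero_ne_two, fin_one_ne_two, fin_zero_ne_two.symm, fin_one_ne_two.symm]

end Colouring

section Matching

variable {m : ℕ}

def partner (σ : Perm (Fin (m + 3))) : Perm (Fin (m + 3)) :=
  if colour (σ * swap 0 1) = 0 then σ * swap 1 2 else σ * swap 0 1

theorem adj_partner (σ : Perm (Fin (m + 3))) : (permutahedron (m + 3)).Adj σ (partner σ) := by
  unfold partner
  split_ifs
  · exact adj_mul_swap σ (by rw [Fin.val_two]; simp)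
  · exact adj_mul_swap σ (by simp)

theorem colour_partner_ne_zero (σ : Perm (Fin (m + 3))) : colour (partner σ) ≠ 0 := by
  unfold partner
  split_ifs with h
  · rw [colour_mul_of_mem σ swap_zero_one_mem_hexagonGroup, swap_apply_right] at h
    rw [colour_mul_of_mem σ swap_one_two_mem_hexagonGroup, swap_apply_left, ← h]
    exact (hexagonColour_injOn σ).ne (by simp) (by simp) fin_zero_ne_two.symm
  · exact h

theorem partner_partner {σ : Perm (Fin (m + 3))} (hσ : colour σ ≠ 0) :
    partner (partner σ) = σ := by
  by_cases h : colour (σ * swap 0 1) = 0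
  · have h' : colour (σ * swap 1 2 * swap 0 1) = 0 := by
      rw [mul_assoc, colour_mul_of_mem σ
          (mul_mem swap_one_two_mem_hexagonGroup swap_zero_one_mem_hexagonGroup), ← h,
        colour_mul_of_mem σ swap_zero_one_mem_hexagonGroup]
      simp [swap_apply_of_ne_of_ne Fin.zero_ne_one fin_zero_ne_two]
    rw [show partner σ = σ * swap 1 2 from if_pos h, partner, if_pos h', mul_assoc,
      swap_mul_self, mul_one]
  · have h' : colour (σ * swap 0 1 * swap 0 1) ≠ 0 := by
      rwa [mul_assoc, swap_mul_self, mul_one]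
    rw [show partner σ = σ * swap 0 1 from if_neg h, partner, if_neg h', mul_assoc,
      swap_mul_self, mul_one]

end Matching

end Permutahedron

/-- for `n ≥ 3`, the permutahedron `Π_n` admits a maximal matching of
cardinality exactly `n!/3`. -/
theorem stmt5 (n : ℕ) (hn : 3 ≤ n) :
    ∃ M : Set (Sym2 (Equiv.Perm (Fin n))),
      IsMaximalMatching (permutahedron n) M ∧ M.ncard * 3 = n.factorial := by
  obtain ⟨m, rfl⟩ : ∃ m, n = m + 3 := ⟨n - 3, by omega⟩
  open Permutahedron in
  obtain ⟨M, hM, hcard⟩ := exists_isMaximalMatching_two_mul_ncard (G := permutahedron (m + 3))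
    (S := {σ | colour σ ≠ 0}) (f := partner) (by simp [colour_partner_ne_zero])
    (fun σ hσ => partner_partner (by simpa using hσ)) (fun σ _ => adj_partner σ)
    (fun σ τ hστ => by
      by_contra! h
      simp only [mem_filter_univ, ne_eq, not_not] at h
      exact colour_ne_of_adj hστ (h.1.trans h.2.symm))
  refine ⟨M, hM, ?_⟩
  have hthird := Permutahedron.three_mul_card_colour_eq_zero (m := m)
  have hsplit := card_filter_add_card_filter_not (s := univ)
    fun σ : Perm (Fin (m + 3)) => Permutahedron.colour σ = 0
  rw [card_univ, Fintype.card_perm, Fintype.card_fin] at hsplit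
  simp only [ne_eq] at hcard
  omega
end

section
/- Let G be a graph whose vertex set is partitioned as V_0 ⊔ V_1 ⊔ ... ⊔ V_ℓ such that every edge joins some V_i to V_{i+1}, and suppose that for all 0 ≤ i < ⌊ℓ/2⌋ every subset X ⊆ V_i has at least |X| neighbors in V_{i+1}, and for all ⌈ℓ/2⌉ < i ≤ ℓ every subset X ⊆ V_i has at least |X| neighbors in V_{i−1}. Then G admits a maximal matching of cardinality at most |V|/3 + 6·max{|V_{⌊ℓ/2⌋}|, |V_{⌈ℓ/2⌉}|}. -/
/-!
Hall's condition gives injections `f` along edges from each level `V_i` into `V_{i+1}` for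
`i < ⌊ℓ/2⌋`; reversing the grading to `ℓ - r` turns the top half into another bottom half.
Pick a residue `a` mod 3 such that the levels `i ≡ a` below the middle hold at most a third of
the vertices there; the edges `v — f v` leaving these levels form a matching of at most that
size, and together with its mirror image on top this gives a matching `M₀` with `3|M₀| ≤ |V|`.
An edge of the bottom half with both ends uncovered by `M₀` must start at a vertex outside the
image of `f`, and by injectivity there are at most `|V_{⌊ℓ/2⌋}|` such vertices; likewise on top,
and the remaining edges meet one of the middle levels. Extending `M₀` to a maximal matching adds
at most one edge per vertex of this set of at most `5 · max(|V_{⌊ℓ/2⌋}|, |V_{⌈ℓ/2⌉}|)` vertices.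
-/

section

variable {V : Type*} {G : SimpleGraph V}

theorem Covered.mono {M M' : Set (Sym2 V)} (h : M ⊆ M') {v : V} (hv : Covered M v) :
    Covered M' v :=
  let ⟨e, he, hve⟩ := hv; ⟨e, h he, hve⟩

namespace IsMatching

variable {M M₀ M₁ M₂ : Set (Sym2 V)}

theorem mono (hM : IsMatching G M) (h : M₀ ⊆ M) : IsMatching G M₀ :=
  ⟨h.trans hM.1, fun e he f hf => hM.2 e (h he) f (h hf)⟩

theorem union (h₁ : IsMatching G M₁) (h₂ : IsMatching G M₂)
    (h : ∀ e ∈ M₁, ∀ e' ∈ M₂, ∀ v ∈ e, v ∉ e') : IsMatching G (M₁ ∪ M₂) := by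
  refine ⟨Set.union_subset h₁.1 h₂.1, ?_⟩
  rintro e (he | he) e' (he' | he') hne v hv hv'
  · exact h₁.2 e he e' he' hne v hv hv'
  · exact h e he e' he' v hv hv'
  · exact h e' he' e he v hv' hv
  · exact h₂.2 e he e' he' hne v hv hv'

theorem not_covered_of_mem_sdiff (hM : IsMatching G M) (h : M₀ ⊆ M) {e : Sym2 V}
    (he : e ∈ M \ M₀) {v : V} (hv : v ∈ e) : ¬ Covered M₀ v := by
  rintro ⟨f, hf, hvf⟩
  exact hM.2 e he.1 f (h hf) (fun hef => he.2 (hef ▸ hf)) v hv hvf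

theorem ncard_le_ncard_of_forall_exists_mem [Finite V] (hM : IsMatching G M) {B : Set V}
    (hB : ∀ e ∈ M, ∃ v ∈ B, v ∈ e) : M.ncard ≤ B.ncard := by
  obtain rfl | ⟨e₀, he₀⟩ := M.eq_empty_or_nonempty
  · simp
  have : Nonempty V := ⟨(hB e₀ he₀).choose⟩
  choose! φ hφB hφe using hB
  refine Set.ncard_le_ncard_of_injOn φ hφB (fun e he f hf hef => ?_) (Set.toFinite B)
  by_contra hne
  exact hM.2 e he f hf hne (φ e) (hφe e he) (hef ▸ hφe f hf)

theorem exists_isMaximalMatching_superset [Finite V] (h : IsMatching G M₀) :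
    ∃ M, IsMaximalMatching G M ∧ M₀ ⊆ M := by
  obtain ⟨M, hM, hmax⟩ := (Set.toFinite {M | IsMatching G M ∧ M₀ ⊆ M}).exists_maximalFor id _
    ⟨M₀, h, subset_rfl⟩
  exact ⟨M, ⟨hM.1, fun M' hM' hsub => (hmax ⟨hM', hM.2.trans hsub⟩ hsub).antisymm hsub⟩, hM.2⟩

/-- Each edge added when extending `M₀` joins two vertices left uncovered by `M₀`, so it meets
`B`, and distinct added edges meet `B` in distinct vertices. -/
theorem exists_isMaximalMatching_ncard_le [Finite V] (h : IsMatching G M₀) {B : Set V}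
    (hB : ∀ u v, G.Adj u v → ¬ Covered M₀ u → ¬ Covered M₀ v → u ∈ B ∨ v ∈ B) :
    ∃ M, IsMaximalMatching G M ∧ M.ncard ≤ M₀.ncard + B.ncard := by
  obtain ⟨M, hM, hsub⟩ := h.exists_isMaximalMatching_superset
  refine ⟨M, hM, ?_⟩
  have hnew : (M \ M₀).ncard ≤ B.ncard := by
    refine (hM.1.mono Set.sdiff_subset).ncard_le_ncard_of_forall_exists_mem fun e he => ?_
    induction e using Sym2.ind with
    | _ u v =>
      rcases hB u v (hM.1.1 he.1) (hM.1.not_covered_of_mem_sdiff hsub he (Sym2.mem_mk_left u v))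
        (hM.1.not_covered_of_mem_sdiff hsub he (Sym2.mem_mk_right u v)) with hu | hv
      · exact ⟨u, hu, Sym2.mem_mk_left u v⟩
      · exact ⟨v, hv, Sym2.mem_mk_right u v⟩
  have := Set.ncard_sdiff_add_ncard_of_subset hsub
  omega

end IsMatching

def HallCondition (G : SimpleGraph V) (A B : Set V) : Prop :=
  ∀ X ⊆ A, X.ncard ≤ (nbhdIn G X B).ncard

namespace HallCondition

variable {A B : Set V}

theorem ncard_le [Finite V] (h : HallCondition G A B) : A.ncard ≤ B.ncard :=
  (h A subset_rfl).trans (Set.ncard_le_ncard fun _ hy => hy.1)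

theorem exists_injOn_adj [Finite V] (h : HallCondition G A B) :
    ∃ f : V → V, Set.InjOn f A ∧ ∀ v ∈ A, f v ∈ B ∧ G.Adj v (f v) := by
  classical
  have := Fintype.ofFinite V
  have hall (S : Finset A) :
      S.card ≤ (Finset.univ.filter fun b : B => ∃ a ∈ S, G.Adj a b).card := by
    have hN : nbhdIn G (Subtype.val '' (S : Set A)) B =
        Subtype.val '' ((Finset.univ.filter fun b : B => ∃ a ∈ S, G.Adj a b : Finset B) :
          Set B) := by
      ext y
      simp only [nbhdIn, Finset.coe_filter, Finset.mem_univ, true_and]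
      aesop
    have hS := h (Subtype.val '' (S : Set A)) (by simp)
    rwa [hN, Set.ncard_image_of_injective _ Subtype.val_injective, Set.ncard_coe_finset,
      Set.ncard_image_of_injective _ Subtype.val_injective, Set.ncard_coe_finset] at hS
  obtain ⟨g, hg, hgadj⟩ :=
    (Fintype.all_card_le_filter_rel_iff_exists_injective fun (a : A) (b : B) => G.Adj a b).1 hall
  refine ⟨fun v => if hv : v ∈ A then g ⟨v, hv⟩ else v, fun x hx y hy hxy => ?_,
    fun v hv => ?_⟩
  · exact congrArg Subtype.val (hg (Subtype.val_injective (by simpa [hx, hy] using hxy)))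
  · simpa [hv] using And.intro (g ⟨v, hv⟩).2 (hgadj ⟨v, hv⟩)

end HallCondition

theorem exists_injOn_succ_of_hallCondition [Finite V] {r : V → ℕ} {k : ℕ}
    (hall : ∀ i < k, HallCondition G {v | r v = i} {v | r v = i + 1}) :
    ∃ f : V → V, Set.InjOn f {v | r v < k} ∧
      ∀ v, r v < k → r (f v) = r v + 1 ∧ G.Adj v (f v) := by
  have level (i : ℕ) : ∃ g : V → V, i < k → Set.InjOn g {v | r v = i} ∧
      ∀ v ∈ {v | r v = i}, g v ∈ {v | r v = i + 1} ∧ G.Adj v (g v) := by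
    by_cases hi : i < k
    · obtain ⟨g, hg⟩ := (hall i hi).exists_injOn_adj
      exact ⟨g, fun _ => hg⟩
    · exact ⟨id, fun h => absurd h hi⟩
  choose g hg using level
  refine ⟨fun v => g (r v) v, fun x hx y hy hxy => ?_, fun v hv => (hg _ hv).2 v rfl⟩
  have hxy' : r x = r y := by
    have hx' := ((hg _ hx).2 x rfl).1
    have hy' := ((hg _ hy).2 y rfl).1
    simp only [Set.mem_ofPred_eq] at hx' hy' hxy
    rw [hxy] at hx'
    omega
  simp only at hxy
  rw [← hxy'] at hxy
  exact (hg _ hx).1 rfl hxy'.symm hxy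

theorem Set.exists_lt_mul_ncard_mod_eq_le [Finite V] (s : Set V) (g : V → ℕ) {n : ℕ}
    (hn : 0 < n) : ∃ a < n, n * {v ∈ s | g v % n = a}.ncard ≤ s.ncard := by
  classical
  have := Fintype.ofFinite V
  have hsum : ∑ a ∈ Finset.range n, n * {v ∈ s | g v % n = a}.ncard =
      ∑ _a ∈ Finset.range n, s.ncard := by
    rw [← Finset.mul_sum, Finset.sum_const, Finset.card_range, smul_eq_mul]
    congr 1
    simp only [Set.ncard_eq_toFinset_card', Set.toFinset_ofPred]
    rw [Finset.card_eq_sum_card_fiberwise (f := fun v => g v % n) (t := Finset.range n)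
      fun v _ => by simpa using Nat.mod_lt _ hn]
    refine Finset.sum_congr rfl fun a _ => congrArg Finset.card ?_
    ext v
    simp
  obtain ⟨a, ha, h⟩ := Finset.exists_le_of_sum_le (by simpa using hn.ne') hsum.le
  exact ⟨a, Finset.mem_range.1 ha, h⟩

section LevelMatching

variable {r : V → ℕ} {f : V → V} {k a : ℕ}

def levelMatching (r : V → ℕ) (f : V → V) (k a : ℕ) : Set (Sym2 V) :=
  (fun w => s(w, f w)) '' {w | r w < k ∧ r w % 3 = a}

theorem isMatching_levelMatching (hf : ∀ v, r v < k → r (f v) = r v + 1 ∧ G.Adj v (f v))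
    (hinj : Set.InjOn f {v | r v < k}) : IsMatching G (levelMatching r f k a) := by
  refine ⟨?_, ?_⟩
  · rintro _ ⟨w, hw, rfl⟩
    exact (hf w hw.1).2
  · rintro _ ⟨w, ⟨hwk, hwa⟩, rfl⟩ _ ⟨w', ⟨hwk', hwa'⟩, rfl⟩ hne v hv hv'
    have hfw := (hf w hwk).1
    have hfw' := (hf w' hwk').1
    rcases Sym2.mem_iff.1 hv with rfl | rfl <;> rcases Sym2.mem_iff.1 hv' with h | h
    · exact hne (h ▸ rfl)
    · rw [h] at hwa; omega
    · rw [← h] at hwa'; omega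
    · exact hne (by rw [hinj hwk hwk' h])

theorem exists_of_mem_levelMatching (hf : ∀ v, r v < k → r (f v) = r v + 1 ∧ G.Adj v (f v))
    {e : Sym2 V} (he : e ∈ levelMatching r f k a) :
    ∃ u v, r u < k ∧ r v = r u + 1 ∧ e = s(u, v) := by
  obtain ⟨w, hw, rfl⟩ := he
  exact ⟨w, f w, hw.1, (hf w hw.1).1, rfl⟩

theorem ncard_levelMatching_le [Finite V] :
    (levelMatching r f k a).ncard ≤ {w | r w < k ∧ r w % 3 = a}.ncard :=
  Set.ncard_image_le (Set.toFinite _)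

theorem covered_levelMatching {w : V} (hw : r w < k) (ha : r w % 3 = a) :
    Covered (levelMatching r f k a) w ∧ Covered (levelMatching r f k a) (f w) :=
  ⟨⟨_, ⟨w, ⟨hw, ha⟩, rfl⟩, Sym2.mem_mk_left _ _⟩, ⟨_, ⟨w, ⟨hw, ha⟩, rfl⟩, Sym2.mem_mk_right _ _⟩⟩

/-- Otherwise the three consecutive levels of `f⁻¹ u`, `u` and `v` would all avoid the
residue `a`. -/
theorem notMem_image_of_not_covered_levelMatching
    (hf : ∀ v, r v < k → r (f v) = r v + 1 ∧ G.Adj v (f v)) (ha : a < 3) {u v : V}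
    (huv : r u + 1 = r v) (hv : r v < k) (hu' : ¬ Covered (levelMatching r f k a) u)
    (hv' : ¬ Covered (levelMatching r f k a) v) : u ∉ f '' {w | r w < k} := by
  rintro ⟨w, hw, rfl⟩
  have hfw := (hf w hw).1
  have : r w % 3 = a ∨ r (f w) % 3 = a ∨ r v % 3 = a := by omega
  rcases this with h | h | h
  · exact hu' (covered_levelMatching hw h).2
  · exact hu' (covered_levelMatching (by omega) h).1
  · exact hv' (covered_levelMatching hv h).1

theorem ncard_setOf_le_sdiff_image [Finite V]
    (hf : ∀ v, r v < k → r (f v) = r v + 1 ∧ G.Adj v (f v)) (hinj : Set.InjOn f {v | r v < k}) :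
    ({v | r v ≤ k} \ f '' {v | r v < k}).ncard = {v | r v = k}.ncard := by
  have hsub : f '' {v | r v < k} ⊆ {v | r v ≤ k} := by
    rintro _ ⟨w, hw, rfl⟩
    exact (hf w hw).1.trans_le hw
  have hsplit : {v | r v ≤ k} = {v | r v < k} ∪ {v | r v = k} := by
    ext v
    simp [le_iff_lt_or_eq]
  have h₁ := Set.ncard_sdiff_add_ncard_of_subset hsub
  have h₂ := Set.ncard_union_eq (s := {v | r v < k}) (t := {v | r v = k})
    (Set.disjoint_left.2 fun v hv hv' => by simp_all)
  rw [hinj.ncard_image] at h₁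
  rw [← hsplit] at h₂
  omega

end LevelMatching

theorem exists_matching_of_hallCondition [Finite V] (r : V → ℕ) (k : ℕ)
    (hall : ∀ i < k, HallCondition G {v | r v = i} {v | r v = i + 1}) :
    ∃ M, IsMatching G M ∧ (∀ e ∈ M, ∃ u v, r u < k ∧ r v = r u + 1 ∧ e = s(u, v)) ∧
      3 * M.ncard ≤ {v | r v < k}.ncard ∧
      ∃ D : Set V, D.ncard ≤ {v | r v = k}.ncard ∧
        ∀ u v, r u + 1 = r v → r v < k → ¬ Covered M u → ¬ Covered M v → u ∈ D := by
  obtain ⟨f, hinj, hf⟩ := exists_injOn_succ_of_hallCondition hall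
  obtain ⟨a, ha, hcard⟩ := Set.exists_lt_mul_ncard_mod_eq_le {v | r v < k} r three_pos
  refine ⟨levelMatching r f k a, isMatching_levelMatching hf hinj,
    fun e he => exists_of_mem_levelMatching hf he,
    (Nat.mul_le_mul_left 3 ncard_levelMatching_le).trans hcard, _,
    (ncard_setOf_le_sdiff_image hf hinj).le, fun u v huv hv hu' hv' => ⟨?_,
      notMem_image_of_not_covered_levelMatching hf ha huv hv hu' hv'⟩⟩
  show r u ≤ k
  omega

theorem hallCondition_tsub {ℓ : ℕ} {r : V → ℕ} (hr : ∀ v, r v ≤ ℓ)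
    (hall : ∀ i, (ℓ + 1) / 2 < i → i ≤ ℓ → HallCondition G {v | r v = i} {v | r v = i - 1}) :
    ∀ i < ℓ / 2, HallCondition G {v | ℓ - r v = i} {v | ℓ - r v = i + 1} := by
  intro i hi
  have level (j : ℕ) (hj : j ≤ ℓ) : {v | ℓ - r v = j} = {v | r v = ℓ - j} := by
    ext v
    have := hr v
    simp only [Set.mem_ofPred_eq]
    omega
  rw [level i (by omega), level (i + 1) (by omega)]
  exact hall (ℓ - i) (by omega) (by omega)

theorem ncard_setOf_pred_le [Finite V] {r : V → ℕ} {k : ℕ}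
    (hall : ∀ i < k, HallCondition G {v | r v = i} {v | r v = i + 1}) :
    {v | r v = k - 1}.ncard ≤ {v | r v = k}.ncard := by
  rcases Nat.eq_zero_or_pos k with rfl | hk
  · rfl
  · simpa [Nat.sub_add_cancel hk] using (hall (k - 1) (by omega)).ncard_le

theorem exists_matching_of_hallCondition_both_halves [Finite V] (ℓ : ℕ) (r : V → ℕ)
    (hr : ∀ v, r v ≤ ℓ)
    (hbot : ∀ i < ℓ / 2, HallCondition G {v | r v = i} {v | r v = i + 1})
    (htop : ∀ i < ℓ / 2, HallCondition G {v | ℓ - r v = i} {v | ℓ - r v = i + 1}) :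
    ∃ (M₀ : Set (Sym2 V)) (D₁ D₂ : Set V), IsMatching G M₀ ∧ 3 * M₀.ncard ≤ Nat.card V ∧
      D₁.ncard ≤ {v | r v = ℓ / 2}.ncard ∧ D₂.ncard ≤ {v | ℓ - r v = ℓ / 2 - 1}.ncard ∧
      ∀ u v, r u + 1 = r v → ¬ Covered M₀ u → ¬ Covered M₀ v →
        u ∈ D₁ ∨ v ∈ D₂ ∨ ℓ / 2 ≤ r v ∧ ℓ / 2 ≤ ℓ - r u + 1 := by
  set m := ℓ / 2
  set p : V → ℕ := fun v => ℓ - r v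
  have hp (v : V) : p v + r v = ℓ := Nat.sub_add_cancel (hr v)
  obtain ⟨M₁, hM₁, hsupp₁, hcard₁, D₁, hD₁, hcov₁⟩ := exists_matching_of_hallCondition r m hbot
  -- stopping one level short of the middle keeps `M₂` vertex-disjoint from `M₁`
  obtain ⟨M₂, hM₂, hsupp₂, hcard₂, D₂, hD₂, hcov₂⟩ :=
    exists_matching_of_hallCondition p (m - 1) fun i hi => htop i (by omega)
  have hM₀ : IsMatching G (M₁ ∪ M₂) := by
    refine hM₁.union hM₂ fun e he e' he' x hx hx' => ?_
    obtain ⟨u, v, hu, hv, rfl⟩ := hsupp₁ e he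
    obtain ⟨u', v', hu', hv', rfl⟩ := hsupp₂ e' he'
    have := hp u'
    have := hp v'
    rcases Sym2.mem_iff.1 hx with rfl | rfl <;> rcases Sym2.mem_iff.1 hx' with rfl | rfl <;> omega
  have hcard₀ : 3 * (M₁ ∪ M₂).ncard ≤ Nat.card V := by
    have hdisj : Disjoint {v | r v < m} {v | p v < m - 1} :=
      Set.disjoint_left.2 fun v (h₁ : r v < m) (h₂ : p v < m - 1) => by have := hp v; omega
    have := Set.ncard_union_le M₁ M₂
    have := Set.ncard_union_eq hdisj
    have := Set.ncard_le_card ({v | r v < m} ∪ {v | p v < m - 1})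
    omega
  refine ⟨M₁ ∪ M₂, D₁, D₂, hM₀, hcard₀, hD₁, hD₂, fun u v h hu hv => ?_⟩
  have := hp u
  by_cases h₁ : r v < m
  · exact Or.inl (hcov₁ u v h h₁ (mt (Covered.mono Set.subset_union_left) hu)
      (mt (Covered.mono Set.subset_union_left) hv))
  by_cases h₂ : p u < m - 1
  · exact Or.inr (Or.inl (hcov₂ v u (by have := hp v; omega) h₂
      (mt (Covered.mono Set.subset_union_right) hv) (mt (Covered.mono Set.subset_union_right) hu)))
  exact Or.inr (Or.inr ⟨by omega, by omega⟩)

theorem exists_matching_of_hallCondition_with_cover [Finite V] (ℓ : ℕ) (r : V → ℕ)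
    (hr : ∀ v, r v ≤ ℓ) (hadj : ∀ u v, G.Adj u v → r u + 1 = r v ∨ r v + 1 = r u)
    (hbot : ∀ i < ℓ / 2, HallCondition G {v | r v = i} {v | r v = i + 1})
    (htop : ∀ i < ℓ / 2, HallCondition G {v | ℓ - r v = i} {v | ℓ - r v = i + 1}) :
    ∃ (M₀ : Set (Sym2 V)) (B : Set V), IsMatching G M₀ ∧ 3 * M₀.ncard ≤ Nat.card V ∧
      B.ncard ≤ 2 * {v | r v = ℓ / 2}.ncard + 3 * {v | ℓ - r v = ℓ / 2}.ncard ∧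
      ∀ u v, G.Adj u v → ¬ Covered M₀ u → ¬ Covered M₀ v → u ∈ B ∨ v ∈ B := by
  obtain ⟨M₀, D₁, D₂, hM₀, hcard₀, hD₁, hD₂, hcov⟩ :=
    exists_matching_of_hallCondition_both_halves ℓ r hr hbot htop
  set m := ℓ / 2
  set B : Set V := D₁ ∪ D₂ ∪ ({w | r w = m} ∪ {w | ℓ - r w = m} ∪ {w | ℓ - r w = m - 1})
    with hBdef
  refine ⟨M₀, B, hM₀, hcard₀, ?_, ?_⟩
  · have := ncard_setOf_pred_le htop
    have := Set.ncard_union_le (D₁ ∪ D₂)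
      ({v | r v = m} ∪ {v | ℓ - r v = m} ∪ {v | ℓ - r v = m - 1})
    have := Set.ncard_union_le D₁ D₂
    have := Set.ncard_union_le ({v | r v = m} ∪ {v | ℓ - r v = m}) {v | ℓ - r v = m - 1}
    have := Set.ncard_union_le {v | r v = m} {v | ℓ - r v = m}
    rw [hBdef]
    omega
  have key (u v : V) (h : r u + 1 = r v) (hu : ¬ Covered M₀ u) (hv : ¬ Covered M₀ v) :
      u ∈ B ∨ v ∈ B := by
    have := hr u
    have := hr v
    rcases hcov u v h hu hv with hD | hD | hmid
    · exact Or.inl (Or.inl (Or.inl hD))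
    · exact Or.inr (Or.inl (Or.inr hD))
    · simp only [B, Set.mem_union, Set.mem_ofPred_eq]
      omega
  intro u v huv hu hv
  rcases hadj u v huv with h | h
  · exact key u v h hu hv
  · exact (key v u h hv hu).symm

end

/-- if the vertices of `G` are graded into levels `V_0, …, V_ℓ` (recorded by a
rank function `r`) so that every edge joins consecutive levels, each `X ⊆ V_i` with
`i < ⌊ℓ/2⌋` has at least `|X|` neighbors in `V_{i+1}`, and each `X ⊆ V_i` with
`⌈ℓ/2⌉ < i ≤ ℓ` has at least `|X|` neighbors in `V_{i−1}`, then `G` admits a maximal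
matching of cardinality at most `|V|/3 + 6·max{|V_{⌊ℓ/2⌋}|, |V_{⌈ℓ/2⌉}|}`. -/
theorem stmt7 {V : Type*} [Fintype V] (G : SimpleGraph V) (ℓ : ℕ) (r : V → ℕ)
    (hr : ∀ v, r v ≤ ℓ)
    (hadj : ∀ u v, G.Adj u v → r u + 1 = r v ∨ r v + 1 = r u)
    (hii : ∀ i, i < ℓ / 2 → ∀ X ⊆ {v | r v = i},
      X.ncard ≤ (nbhdIn G X {v | r v = i + 1}).ncard)
    (hiii : ∀ i, (ℓ + 1) / 2 < i → i ≤ ℓ → ∀ X ⊆ {v | r v = i},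
      X.ncard ≤ (nbhdIn G X {v | r v = i - 1}).ncard) :
    ∃ M : Set (Sym2 V), IsMaximalMatching G M ∧
      (M.ncard : ℝ) ≤ (Fintype.card V : ℝ) / 3 +
        6 * max ({v | r v = ℓ / 2}.ncard : ℝ) ({v | r v = (ℓ + 1) / 2}.ncard : ℝ) := by
  obtain ⟨M₀, B, hM₀, hcard₀, hB, hcov⟩ :=
    exists_matching_of_hallCondition_with_cover ℓ r hr hadj hii (hallCondition_tsub hr hiii)
  obtain ⟨M, hM, hMcard⟩ := hM₀.exists_isMaximalMatching_ncard_le hcov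
  refine ⟨M, hM, ?_⟩
  have hmid : {v | ℓ - r v = ℓ / 2} = {v | r v = (ℓ + 1) / 2} := by
    ext v
    have := hr v
    simp only [Set.mem_ofPred_eq]
    omega
  rw [hmid] at hB
  rw [Nat.card_eq_fintype_card] at hcard₀
  have h₁ : (M.ncard : ℝ) ≤ M₀.ncard + B.ncard := by exact_mod_cast hMcard
  have h₂ : 3 * (M₀.ncard : ℝ) ≤ Fintype.card V := by exact_mod_cast hcard₀
  have h₃ : (B.ncard : ℝ) ≤ 2 * {v | r v = ℓ / 2}.ncard + 3 * {v | r v = (ℓ + 1) / 2}.ncard := by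
    exact_mod_cast hB
  have := le_max_left ({v | r v = ℓ / 2}.ncard : ℝ) ({v | r v = (ℓ + 1) / 2}.ncard : ℝ)
  have := le_max_right ({v | r v = ℓ / 2}.ncard : ℝ) ({v | r v = (ℓ + 1) / 2}.ncard : ℝ)
  linarith
end

section
/- The n-dimensional hypercube Q_n admits a maximal matching of cardinality at most 2^n/3 + 6·C(n, ⌊n/2⌋). -/
/-!
Let `L k` be the set of strings of weight `k`. Every string of `L k` has `n - k` neighbours in
`L (k + 1)` and every string of `L (k + 1)` has `k + 1` neighbours in `L k`, so by Hall's theorem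
there is a matching between the two levels saturating the smaller one. Let `M₀` be the union of
these matchings for `k ≡ 0 (mod 3)` and extend it to a maximal matching `M`. Every edge of `Q_n`
has an endpoint in `S = ⋃ⱼ (L (3j) ∪ L (3j+1))` and the edges of `M₀` have both, so
`|M| + |M₀| ≤ |S|`, i.e. `|M| ≤ ∑ⱼ max (C(n,3j), C(n,3j+1))`. Each summand is a third of the
block `C(n,3j) + C(n,3j+1) + C(n,3j+2)` up to the local variation of the binomial row, whose
total variation is at most `2 C(n,⌊n/2⌋)` by unimodality; hence `|M| ≤ 2^n/3 + 2 C(n,⌊n/2⌋)`.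
-/

open Finset

/-- Hall's condition holds: double counting the related pairs between `s ⊆ A` and its
neighbourhood `N` gives `#s * d ≤ #N * d`. -/
theorem Finset.exists_injective_of_degree_bounds {α β : Type*} [DecidableEq β]
    (r : α → β → Prop) [∀ a b, Decidable (r a b)] {A : Finset α} {B : Finset β} {d : ℕ}
    (hd : 0 < d) (hA : ∀ a ∈ A, d ≤ #(B.bipartiteAbove r a))
    (hB : ∀ b ∈ B, #(A.bipartiteBelow r b) ≤ d) :
    ∃ f : A → β, Function.Injective f ∧ ∀ a, f a ∈ B ∧ r a (f a) := by
  have hall : ∀ s : Finset A, #s ≤ #(s.biUnion fun a => B.bipartiteAbove r a) := by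
    intro s
    set N := s.biUnion fun a => B.bipartiteAbove r a
    have hdouble : #s * d ≤ #N * d := by
      refine card_mul_le_card_mul (fun (a : A) b => r a b) (fun a ha => ?_) (fun b hb => ?_)
      · refine (hA a a.2).trans (card_le_card fun b hb => ?_)
        rw [mem_bipartiteAbove] at hb ⊢
        exact ⟨mem_biUnion.2 ⟨a, ha, (mem_bipartiteAbove _).2 hb⟩, hb.2⟩
      · obtain ⟨a, -, hab⟩ := mem_biUnion.1 hb
        refine le_trans (card_le_card_of_injOn Subtype.val (fun a' ha' => ?_)
          Subtype.val_injective.injOn) (hB b ((mem_bipartiteAbove _).1 hab).1)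
        rw [mem_coe, mem_bipartiteBelow] at ha' ⊢
        exact ⟨a'.2, ha'.2⟩
    exact Nat.le_of_mul_le_mul_right hdouble hd
  obtain ⟨f, hf, hfB⟩ := (all_card_le_biUnion_card_iff_exists_injective _).1 hall
  exact ⟨f, hf, fun a => (mem_bipartiteAbove _).1 (hfB a)⟩

section Matching

variable {V : Type*} {G : SimpleGraph V}

theorem exists_isMaximalMatching_superset [Finite V] {M : Set (Sym2 V)} (hM : IsMatching G M) :
    ∃ M', IsMaximalMatching G M' ∧ M ⊆ M' := by
  obtain ⟨M', hMM', hmax⟩ := Finite.exists_le_maximal (p := IsMatching G) hM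
  exact ⟨M', ⟨hmax.prop, fun N hN hM'N => hmax.eq_of_superset hN hM'N⟩, hMM'⟩

variable [DecidableEq V]

theorem exists_isMatching_card_eq_of_degree_bounds [DecidableRel G.Adj] {A B : Finset V}
    (hAB : Disjoint A B) {d : ℕ} (hd : 0 < d) (hA : ∀ a ∈ A, d ≤ #{b ∈ B | G.Adj a b})
    (hB : ∀ b ∈ B, #{a ∈ A | G.Adj a b} ≤ d) :
    ∃ E : Finset (Sym2 V), IsMatching G E ∧ #E = #A ∧ ∀ e ∈ E, ∀ v ∈ e, v ∈ A ∨ v ∈ B := by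
  obtain ⟨f, hf, hfB⟩ := exists_injective_of_degree_bounds G.Adj hd hA hB
  have hne : ∀ a a' : A, (a : V) ≠ f a' := fun a a' h =>
    disjoint_left.1 hAB a.2 (h ▸ (hfB a').1)
  have hmk : Function.Injective fun a : A => s((a : V), f a) := by
    intro a a' h
    rcases Sym2.eq_iff.1 h with ⟨h, -⟩ | ⟨h, -⟩
    · exact Subtype.ext h
    · exact absurd h (hne a a')
  refine ⟨univ.image fun a : A => s((a : V), f a), ⟨?_, ?_⟩, ?_, ?_⟩
  · simp only [coe_image, coe_univ, Set.image_univ, Set.range_subset_iff]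
    exact fun a => (hfB a).2
  · simp only [mem_coe, mem_image, mem_univ, true_and]
    rintro _ ⟨a, rfl⟩ _ ⟨a', rfl⟩ hne' v hv hv'
    have haa' : a ≠ a' := fun h => hne' (h ▸ rfl)
    rw [Sym2.mem_iff] at hv hv'
    rcases hv with rfl | rfl <;> rcases hv' with h | h
    · exact haa' (Subtype.ext h)
    · exact hne a a' h
    · exact hne a' a h.symm
    · exact haa' (hf h)
  · rw [card_image_of_injective _ hmk, card_univ, Fintype.card_coe]
  · simp only [mem_image, mem_univ, true_and]
    rintro _ ⟨a, rfl⟩ v hv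
    rcases Sym2.mem_iff.1 hv with rfl | rfl
    · exact Or.inl a.2
    · exact Or.inr (hfB a).1

theorem isMatching_biUnion_of_forall_mem_fiber {ι : Type*} {s : Finset ι}
    {E : ι → Finset (Sym2 V)} (c : V → ι) (hE : ∀ i ∈ s, IsMatching G (E i))
    (hc : ∀ i ∈ s, ∀ e ∈ E i, ∀ v ∈ e, c v = i) : IsMatching G ↑(s.biUnion E) := by
  refine ⟨fun e he => ?_, fun e he e' he' hee' v hv hv' => ?_⟩
  · obtain ⟨i, hi, he⟩ := mem_biUnion.1 he
    exact (hE i hi).1 he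
  obtain ⟨i, hi, he⟩ := mem_biUnion.1 he
  obtain ⟨j, hj, he'⟩ := mem_biUnion.1 he'
  obtain rfl : i = j := (hc i hi e he v hv).symm.trans (hc j hj e' he' v hv')
  exact (hE i hi).2 e he e' he' hee' v hv hv'

theorem card_biUnion_of_forall_mem_fiber {ι : Type*} {s : Finset ι} {E : ι → Finset (Sym2 V)}
    (c : V → ι) (hc : ∀ i ∈ s, ∀ e ∈ E i, ∀ v ∈ e, c v = i) :
    #(s.biUnion E) = ∑ i ∈ s, #(E i) := by
  refine card_biUnion fun i hi j hj hij => disjoint_left.2 fun e he he' => hij ?_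
  exact (hc i hi e he _ e.out_fst_mem).symm.trans (hc j hj e he' _ e.out_fst_mem)

/-- Each vertex of `S` lies in at most one edge of `M`, each edge of `M` contains a vertex of `S`,
and each edge of `M₀` contains two. -/
theorem IsMatching.card_add_card_le {M M₀ : Finset (Sym2 V)} {S : Finset V}
    (hM : IsMatching G M) (hM₀ : M₀ ⊆ M) (hmeet : ∀ e ∈ M, ∃ v ∈ S, v ∈ e)
    (hM₀S : ∀ e ∈ M₀, ∀ v ∈ e, v ∈ S) : #M + #M₀ ≤ #S := by
  have hbelow : ∀ v ∈ S, #(M.bipartiteBelow (fun e v => v ∈ e) v) ≤ 1 := by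
    refine fun v _ => card_le_one.2 fun e he e' he' => ?_
    rw [mem_bipartiteBelow] at he he'
    by_contra hne
    exact hM.2 e he.1 e' he'.1 hne v he.2 he'.2
  have habove :
      ∀ e ∈ M, 1 + (if e ∈ M₀ then 1 else 0) ≤ #(S.bipartiteAbove (fun e v => v ∈ e) e) := by
    intro e he
    split_ifs with he₀
    · induction e with
      | h x y =>
        have hxy : x ≠ y := (hM.1 he).ne
        calc 1 + 1 = #{x, y} := (card_pair hxy).symm
          _ ≤ _ := card_le_card <| by
            simp [insert_subset_iff, hM₀S _ he₀]
    · obtain ⟨v, hv, hve⟩ := hmeet e he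
      exact card_pos.2 ⟨v, (mem_bipartiteAbove _).2 ⟨hv, hve⟩⟩
  calc #M + #M₀ = ∑ e ∈ M, (1 + if e ∈ M₀ then 1 else 0) := by
        rw [sum_add_distrib, sum_boole, filter_mem_eq_inter, inter_eq_right.2 hM₀]; simp
    _ ≤ ∑ e ∈ M, #(S.bipartiteAbove (fun e v => v ∈ e) e) := sum_le_sum habove
    _ = ∑ v ∈ S, #(M.bipartiteBelow (fun e v => v ∈ e) v) :=
        sum_card_bipartiteAbove_eq_sum_card_bipartiteBelow _
    _ ≤ ∑ _v ∈ S, 1 := sum_le_sum hbelow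
    _ = #S := by rw [sum_const, smul_eq_mul, mul_one]

end Matching

theorem Finset.sum_range_mul_eq_sum_sum {M : Type*} [AddCommMonoid M] (f : ℕ → M) (m T : ℕ) :
    ∑ k ∈ range (m * T), f k = ∑ j ∈ range T, ∑ r ∈ range m, f (m * j + r) := by
  induction T with
  | zero => simp
  | succ T ih => rw [mul_add_one, sum_range_add, ih, sum_range_succ]

theorem Nat.choose_succ_le_of_half_le {n k : ℕ} (h : n / 2 ≤ k) :
    n.choose (k + 1) ≤ n.choose k := by
  refine Nat.le_of_mul_le_mul_right ?_ k.succ_pos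
  rw [Nat.choose_succ_right_eq]
  exact Nat.mul_le_mul_left _ (by omega)

theorem Nat.sum_abs_choose_succ_sub_choose_le {n K : ℕ} (hK : n / 2 ≤ K) :
    ∑ k ∈ range K, |(n.choose (k + 1) : ℝ) - n.choose k| ≤ 2 * n.choose (n / 2) := by
  have hup : ∑ k ∈ range (n / 2), |(n.choose (k + 1) : ℝ) - n.choose k|
      = n.choose (n / 2) - n.choose 0 := by
    rw [← sum_range_sub (fun k => (n.choose k : ℝ))]
    refine sum_congr rfl fun k hk => abs_of_nonneg (sub_nonneg.2 ?_)
    exact_mod_cast Nat.choose_le_succ_of_lt_half_left (mem_range.1 hk)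
  have hdown : ∑ k ∈ Ico (n / 2) K, |(n.choose (k + 1) : ℝ) - n.choose k|
      = n.choose (n / 2) - n.choose K := by
    rw [← neg_sub, ← sum_Ico_sub (fun k => (n.choose k : ℝ)) hK, ← sum_neg_distrib]
    refine sum_congr rfl fun k hk => abs_of_nonpos (sub_nonpos.2 ?_)
    exact_mod_cast Nat.choose_succ_le_of_half_le (mem_Ico.1 hk).1
  rw [← sum_range_add_sum_Ico _ hK, hup, hdown]
  have h₀ : (0 : ℝ) ≤ n.choose 0 := Nat.cast_nonneg _
  have hK : (0 : ℝ) ≤ n.choose K := Nat.cast_nonneg _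
  linarith

theorem Nat.sum_range_choose_of_lt {n K : ℕ} (h : n < K) :
    ∑ k ∈ range K, n.choose k = 2 ^ n := by
  rw [← Nat.sum_range_choose n]
  refine (sum_subset (range_subset_range.2 h) fun k _ hk => ?_).symm
  exact Nat.choose_eq_zero_of_lt (by simpa using hk)

theorem Nat.sum_max_choose_le {n T : ℕ} (hT : n < 3 * T) :
    ∑ j ∈ range T, max (n.choose (3 * j) : ℝ) (n.choose (3 * j + 1))
      ≤ 2 ^ n / 3 + 2 * n.choose (n / 2) := by
  set a : ℕ → ℝ := fun k => n.choose k
  -- `max a b` exceeds `a`, `b`, `c` by at most `|b - a|`, `|b - a|`, `|b - a| + |c - b|`.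
  have hblock : ∀ j, 3 * max (a (3 * j)) (a (3 * j + 1)) ≤
      ∑ k ∈ range 3, (a (3 * j + k) + 3 * |a (3 * j + k + 1) - a (3 * j + k)|) := by
    intro j
    simp only [sum_range_succ, range_zero, sum_empty, add_zero, zero_add]
    have := abs_nonneg (a (3 * j + 2 + 1) - a (3 * j + 2))
    rcases max_cases (a (3 * j)) (a (3 * j + 1)) with ⟨h, -⟩ | ⟨h, -⟩ <;> rw [h] <;>
      linarith [le_abs_self (a (3 * j + 1) - a (3 * j)), neg_abs_le (a (3 * j + 1) - a (3 * j)),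
        le_abs_self (a (3 * j + 1 + 1) - a (3 * j + 1)),
        neg_abs_le (a (3 * j + 1 + 1) - a (3 * j + 1))]
  have hsum : ∑ k ∈ range (3 * T), a k = 2 ^ n := by
    simp only [a]
    exact_mod_cast Nat.sum_range_choose_of_lt hT
  have hvar := Nat.sum_abs_choose_succ_sub_choose_le (K := 3 * T) (n := n) (by omega)
  have : 3 * ∑ j ∈ range T, max (a (3 * j)) (a (3 * j + 1)) ≤ 2 ^ n + 6 * n.choose (n / 2) :=
    calc 3 * ∑ j ∈ range T, max (a (3 * j)) (a (3 * j + 1))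
        ≤ ∑ j ∈ range T, ∑ r ∈ range 3,
            (a (3 * j + r) + 3 * |a (3 * j + r + 1) - a (3 * j + r)|) := by
          rw [mul_sum]
          exact sum_le_sum fun j _ => hblock j
      _ = ∑ k ∈ range (3 * T), a k + 3 * ∑ k ∈ range (3 * T), |a (k + 1) - a k| := by
          rw [← sum_range_mul_eq_sum_sum fun k => a k + 3 * |a (k + 1) - a k|, sum_add_distrib,
            mul_sum]
      _ ≤ 2 ^ n + 6 * n.choose (n / 2) := by rw [hsum]; linarith
  linarith

namespace Hypercube

variable {n : ℕ}

def bitFlip (x : Fin n → Bool) (i : Fin n) : Fin n → Bool := Function.update x i (!x i)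

def weight (x : Fin n → Bool) : ℕ := #{i | x i = true}

def level (n k : ℕ) : Finset (Fin n → Bool) := {x | weight x = k}

@[simp]
theorem mem_level {k : ℕ} {x : Fin n → Bool} : x ∈ level n k ↔ weight x = k := by
  simp [level]

theorem bitFlip_apply_self (x : Fin n → Bool) (i : Fin n) : bitFlip x i i = !x i := by
  simp [bitFlip]

theorem bitFlip_apply_of_ne (x : Fin n → Bool) {i j : Fin n} (h : j ≠ i) :
    bitFlip x i j = x j :=
  Function.update_of_ne h _ _

theorem bitFlip_injective (x : Fin n → Bool) : Function.Injective (bitFlip x) := by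
  intro i j h
  by_contra hij
  have := congrFun h i
  rw [bitFlip_apply_self, bitFlip_apply_of_ne x hij] at this
  exact Bool.not_ne_self (x i) this

theorem adj_iff {x y : Fin n → Bool} : (hypercube n).Adj x y ↔ ∃ i, y = bitFlip x i := by
  have hsymm : (∃! i, y i ≠ x i) ↔ ∃! i, x i ≠ y i := by simp only [ne_comm]
  simp only [hypercube, SimpleGraph.fromRel_adj, hsymm, or_self]
  constructor
  · rintro ⟨-, i, hi, hu⟩
    refine ⟨i, funext fun j => ?_⟩
    by_cases hji : j = i
    · subst hji
      rw [bitFlip_apply_self]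
      revert hi; cases x j <;> cases y j <;> simp
    · rw [bitFlip_apply_of_ne x hji]
      by_contra hne
      exact hji (hu j (Ne.symm hne))
  · rintro ⟨i, rfl⟩
    refine ⟨fun h => ?_, i, by simp [bitFlip_apply_self], fun j hj => ?_⟩
    · have := congrFun h i
      simp [bitFlip_apply_self] at this
    · by_contra hji
      exact hj (bitFlip_apply_of_ne x hji).symm

instance (n : ℕ) : DecidableRel (hypercube n).Adj := fun _ _ => decidable_of_iff' _ adj_iff

theorem card_filter_eq_false (x : Fin n → Bool) : #{i | x i = false} = n - weight x := by
  have h := card_filter_add_card_filter_not (s := univ) fun i => x i = true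
  simp only [Bool.not_eq_true, card_univ, Fintype.card_fin] at h
  rw [weight]
  omega

theorem weight_le (x : Fin n → Bool) : weight x ≤ n := by
  simpa [weight] using card_filter_le univ fun i => x i = true

theorem weight_bitFlip_of_eq_false {x : Fin n → Bool} {i : Fin n} (h : x i = false) :
    weight (bitFlip x i) = weight x + 1 := by
  have : univ.filter (fun j => bitFlip x i j = true)
      = insert i (univ.filter fun j => x j = true) := by
    ext j
    by_cases hji : j = i
    · subst hji; simp [bitFlip_apply_self, h]
    · simp [bitFlip_apply_of_ne x hji, hji]
  rw [weight, this, card_insert_of_notMem (by simp [h]), weight]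

theorem weight_bitFlip_of_eq_true {x : Fin n → Bool} {i : Fin n} (h : x i = true) :
    weight (bitFlip x i) + 1 = weight x := by
  have hflip : bitFlip (bitFlip x i) i = x := by
    funext j
    by_cases hji : j = i
    · subst hji; simp [bitFlip_apply_self]
    · rw [bitFlip_apply_of_ne _ hji, bitFlip_apply_of_ne _ hji]
  rw [← weight_bitFlip_of_eq_false (x := bitFlip x i) (i := i) (by simp [bitFlip_apply_self, h]),
    hflip]

theorem weight_eq_or_eq_of_adj {x y : Fin n → Bool} (h : (hypercube n).Adj x y) :
    weight y = weight x + 1 ∨ weight x = weight y + 1 := by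
  obtain ⟨i, rfl⟩ := adj_iff.1 h
  cases hx : x i
  · exact Or.inl (weight_bitFlip_of_eq_false hx)
  · exact Or.inr (weight_bitFlip_of_eq_true hx).symm

theorem card_level (n k : ℕ) : #(level n k) = n.choose k := by
  rw [show n.choose k = #(powersetCard k (univ : Finset (Fin n))) by simp]
  refine card_nbij' (fun x => univ.filter fun i => x i = true) (fun s i => decide (i ∈ s))
    ?_ ?_ ?_ ?_
  · intro x hx
    simpa [weight] using hx
  · intro s hs
    simp only [mem_coe, mem_powersetCard] at hs
    simp [weight, hs.2]
  · intro x _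
    funext i; simp
  · intro s _
    ext i; simp

theorem card_adj_level_succ {k : ℕ} {x : Fin n → Bool} (hx : weight x = k) :
    #{y ∈ level n (k + 1) | (hypercube n).Adj x y} = n - k := by
  have : ({y ∈ level n (k + 1) | (hypercube n).Adj x y} : Finset _)
      = ({i | x i = false} : Finset (Fin n)).image (bitFlip x) := by
    ext y
    simp only [mem_filter, mem_level, adj_iff, mem_image, mem_univ, true_and]
    constructor
    · rintro ⟨hy, i, rfl⟩
      refine ⟨i, ?_, rfl⟩
      cases hi : x i
      · rfl
      · have := weight_bitFlip_of_eq_true hi; omega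
    · rintro ⟨i, hi, rfl⟩
      exact ⟨by rw [weight_bitFlip_of_eq_false hi, hx], i, rfl⟩
  rw [this, card_image_of_injective _ (bitFlip_injective x), card_filter_eq_false, hx]

theorem card_adj_level_pred {k : ℕ} {x : Fin n → Bool} (hx : weight x = k + 1) :
    #{y ∈ level n k | (hypercube n).Adj x y} = k + 1 := by
  have : ({y ∈ level n k | (hypercube n).Adj x y} : Finset _)
      = ({i | x i = true} : Finset (Fin n)).image (bitFlip x) := by
    ext y
    simp only [mem_filter, mem_level, adj_iff, mem_image, mem_univ, true_and]
    constructor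
    · rintro ⟨hy, i, rfl⟩
      refine ⟨i, ?_, rfl⟩
      cases hi : x i
      · have := weight_bitFlip_of_eq_false hi; omega
      · rfl
    · rintro ⟨i, hi, rfl⟩
      exact ⟨by have := weight_bitFlip_of_eq_true hi; omega, i, rfl⟩
  rw [this, card_image_of_injective _ (bitFlip_injective x), ← hx, weight]

theorem exists_isMatching_levels (n k : ℕ) :
    ∃ E : Finset (Sym2 (Fin n → Bool)), IsMatching (hypercube n) E ∧
      (∀ e ∈ E, ∀ v ∈ e, weight v = k ∨ weight v = k + 1) ∧
      min (n.choose k) (n.choose (k + 1)) ≤ #E := by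
  have hdisj : Disjoint (level n k) (level n (k + 1)) :=
    disjoint_left.2 fun x hx hx' => by simp_all
  rcases le_total (k + 1) (n - k) with hup | hdown
  · obtain ⟨E, hE, hcard, hv⟩ := exists_isMatching_card_eq_of_degree_bounds hdisj (d := n - k)
      (by omega) (fun x hx => (card_adj_level_succ (mem_level.1 hx)).ge) fun y hy => by
        simp_rw [SimpleGraph.adj_comm _ _ y]
        rw [card_adj_level_pred (mem_level.1 hy)]
        exact hup
    refine ⟨E, hE, fun e he v hv' => by simpa using hv e he v hv', ?_⟩
    rw [hcard, card_level]
    exact min_le_left _ _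
  · obtain ⟨E, hE, hcard, hv⟩ := exists_isMatching_card_eq_of_degree_bounds hdisj.symm
      (d := k + 1) k.succ_pos (fun x hx => (card_adj_level_pred (mem_level.1 hx)).ge)
      fun y hy => by
        simp_rw [SimpleGraph.adj_comm _ _ y]
        rw [card_adj_level_succ (mem_level.1 hy)]
        exact hdown
    refine ⟨E, hE, fun e he v hv' => by simpa [or_comm] using hv e he v hv', ?_⟩
    rw [hcard, card_level]
    exact min_le_right _ _

theorem exists_mem_weight_mod_three_ne_two {e : Sym2 (Fin n → Bool)}
    (he : e ∈ (hypercube n).edgeSet) : ∃ v ∈ e, weight v % 3 ≠ 2 := by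
  induction e using Sym2.ind with
  | h x y =>
    have hxy := weight_eq_or_eq_of_adj ((hypercube n).mem_edgeSet.1 he)
    by_cases hx : weight x % 3 = 2
    · exact ⟨y, Sym2.mem_mk_right x y, by omega⟩
    · exact ⟨x, Sym2.mem_mk_left x y, hx⟩

theorem exists_isMaximalMatching_ncard_le (n : ℕ) :
    ∃ M : Set (Sym2 (Fin n → Bool)), IsMaximalMatching (hypercube n) M ∧
      (M.ncard : ℝ) ≤ 2 ^ n / 3 + 2 * n.choose (n / 2) := by
  classical
  choose E hE hE_level hE_card using exists_isMatching_levels n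
  set T := n + 1
  set M₀ := (range T).biUnion fun j => E (3 * j)
  set S := (range T).biUnion fun j => level n (3 * j) ∪ level n (3 * j + 1)
  have hfiber : ∀ j ∈ range T, ∀ e ∈ E (3 * j), ∀ v ∈ e, weight v / 3 = j :=
    fun j _ e he v hv => by rcases hE_level _ e he v hv with h | h <;> omega
  have hM₀ : IsMatching (hypercube n) M₀ :=
    isMatching_biUnion_of_forall_mem_fiber _ (fun j _ => hE _) hfiber
  obtain ⟨M, hM, hM₀M⟩ := exists_isMaximalMatching_superset hM₀
  obtain ⟨M, rfl⟩ := M.toFinite.exists_finset_coe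
  refine ⟨M, hM, ?_⟩
  have hS : ∀ v, weight v % 3 ≠ 2 → v ∈ S := fun v hv => by
    have := weight_le v
    simp only [S, mem_biUnion, mem_range, mem_union, mem_level]
    exact ⟨weight v / 3, by omega, by omega⟩
  have hcount : #M + #M₀ ≤ #S := by
    refine hM.1.card_add_card_le (coe_subset.1 hM₀M) (fun e he => ?_) fun e he v hv => ?_
    · obtain ⟨v, hve, hv⟩ := exists_mem_weight_mod_three_ne_two (hM.1.1 he)
      exact ⟨v, hS v hv, hve⟩
    · obtain ⟨j, -, he⟩ := mem_biUnion.1 he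
      apply hS
      rcases hE_level _ e he v hv with h | h <;> omega
  have hM₀_card : ∑ j ∈ range T, min (n.choose (3 * j)) (n.choose (3 * j + 1)) ≤ #M₀ := by
    rw [card_biUnion_of_forall_mem_fiber _ hfiber]
    exact sum_le_sum fun j _ => hE_card _
  have hS_card : #S ≤ ∑ j ∈ range T, (n.choose (3 * j) + n.choose (3 * j + 1)) := by
    refine card_biUnion_le.trans (sum_le_sum fun j _ => ?_)
    rw [← card_level, ← card_level]
    exact card_union_le _ _
  have hM_card : (#M : ℝ) + ∑ j ∈ range T, min (n.choose (3 * j) : ℝ) (n.choose (3 * j + 1))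
      ≤ ∑ j ∈ range T, ((n.choose (3 * j) : ℝ) + n.choose (3 * j + 1)) := by
    exact_mod_cast (Nat.add_le_add_left hM₀_card _).trans (hcount.trans hS_card)
  simp_rw [← min_add_max (n.choose (3 * _) : ℝ), sum_add_distrib] at hM_card
  rw [Set.ncard_coe_finset]
  linarith [Nat.sum_max_choose_le (n := n) (T := T) (by omega)]

end Hypercube

/-- `Q_n` admits a maximal matching of cardinality at most
`2^n/3 + 6·C(n, ⌊n/2⌋)`. -/
theorem stmt10 (n : ℕ) :
    ∃ M : Set (Sym2 (Fin n → Bool)), IsMaximalMatching (hypercube n) M ∧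
      (M.ncard : ℝ) ≤ (2 : ℝ) ^ n / 3 + 6 * (n.choose (n / 2) : ℝ) := by
  obtain ⟨M, hM, hcard⟩ := Hypercube.exists_isMaximalMatching_ncard_le n
  refine ⟨M, hM, hcard.trans ?_⟩
  have : (0 : ℝ) ≤ n.choose (n / 2) := Nat.cast_nonneg _
  linarith
end

section
/- With the setup of the explicit construction, the permutahedron Π_n (n ≥ 4) admits two maximal matchings M^• and M^∘, each of size n!/3, whose sets of exposed vertices are disjoint; in particular every permutation of [n] is covered by M^• or by M^∘. -/
/-- Build a permutation of `Fin 4` from its one-line notation (0-based values). -/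
noncomputable def mk4 (f : Fin 4 → Fin 4) (h : Function.Bijective f := by decide) :
    Equiv.Perm (Fin 4) :=
  Equiv.ofBijective f h

/-- The maximal matching `M⁺` of `Π_4` (permutations written one-line, 0-based). -/
def Mplus : Set (Sym2 (Equiv.Perm (Fin 4))) :=
  { s(mk4 ![1,0,2,3], mk4 ![1,2,0,3]),   -- {2134, 2314}
    s(mk4 ![2,1,3,0], mk4 ![1,2,3,0]),   -- {3241, 2341}
    s(mk4 ![2,3,0,1], mk4 ![2,0,3,1]),   -- {3412, 3142}
    s(mk4 ![1,3,0,2], mk4 ![3,1,0,2]),   -- {2413, 4213}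
    s(mk4 ![3,0,2,1], mk4 ![0,3,2,1]),   -- {4132, 1432}
    s(mk4 ![0,1,3,2], mk4 ![0,3,1,2]),   -- {1243, 1423}
    s(mk4 ![2,0,1,3], mk4 ![0,2,1,3]),   -- {3124, 1324}
    s(mk4 ![3,2,1,0], mk4 ![3,1,2,0]) }  -- {4321, 4231}

/-- The maximal matching `M⁻` of `Π_4` (permutations written one-line, 0-based). -/
def Mminus : Set (Sym2 (Equiv.Perm (Fin 4))) :=
  { s(mk4 ![0,2,1,3], mk4 ![0,1,2,3]),   -- {1324, 1234}
    s(mk4 ![1,0,3,2], mk4 ![1,3,0,2]),   -- {2143, 2413}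
    s(mk4 ![3,1,2,0], mk4 ![1,3,2,0]),   -- {4231, 2431}
    s(mk4 ![2,1,0,3], mk4 ![1,2,0,3]),   -- {3214, 2314}
    s(mk4 ![3,0,1,2], mk4 ![0,3,1,2]),   -- {4123, 1423}
    s(mk4 ![2,0,3,1], mk4 ![0,2,3,1]),   -- {3142, 1342}
    s(mk4 ![3,2,0,1], mk4 ![3,0,2,1]),   -- {4312, 4132}
    s(mk4 ![2,1,3,0], mk4 ![2,3,1,0]) }  -- {3241, 3421}

/-- The set of vertices exposed (covered by no edge) by a matching `M`. -/
def exposedSet {V : Type*} (M : Set (Sym2 V)) : Set V :=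
  {v | ¬ Covered M v}

/-- The set of the first four values `{σ_1, σ_2, σ_3, σ_4}` of a permutation of `[n]`
(for `n ≥ 4`); this is the complement `s̄` of the suffix `s = σ_5 … σ_n`. -/
def firstFour (n : ℕ) (hn : 4 ≤ n) (σ : Equiv.Perm (Fin n)) : Finset (Fin n) :=
  Finset.univ.image (fun j : Fin 4 => σ (Fin.castLE hn j))

lemma firstFour_card (n : ℕ) (hn : 4 ≤ n) (σ : Equiv.Perm (Fin n)) :
    (firstFour n hn σ).card = 4 := by
  rw [firstFour, Finset.card_image_of_injective _
    (show Function.Injective (fun j : Fin 4 => σ (Fin.castLE hn j)) from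
      fun a b h => Fin.castLE_injective hn (σ.injective h))]
  simp

/-- The pattern `π` of the first four entries of `σ`: the permutation of `[4]` such that
`σ = φ_s(π)` for the suffix `s` of `σ`, i.e. `σ_j = s̄_{π_j}` for `j ∈ [4]`,
where `s̄_1 < s̄_2 < s̄_3 < s̄_4` are the values not occurring in the suffix. -/
noncomputable def patt (n : ℕ) (hn : 4 ≤ n) (σ : Equiv.Perm (Fin n)) :
    Equiv.Perm (Fin 4) :=
  Equiv.ofBijective
    (fun j => ((firstFour n hn σ).orderIsoOfFin (firstFour_card n hn σ)).symm
      ⟨σ (Fin.castLE hn j), Finset.mem_image.mpr ⟨j, Finset.mem_univ _, rfl⟩⟩)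
    (Finite.injective_iff_bijective.mp (fun a b h => by
      have h2 := EquivLike.injective
        ((firstFour n hn σ).orderIsoOfFin (firstFour_card n hn σ)).symm h
      exact Fin.castLE_injective hn (σ.injective (congrArg Subtype.val h2))))

/-- The number of inversions of the length-`(n−4)` suffix `s = σ_5 … σ_n` of `σ`. -/
def suffixInv (n : ℕ) (σ : Equiv.Perm (Fin n)) : ℕ :=
  (Finset.univ.filter (fun p : Fin n × Fin n =>
    4 ≤ (p.1 : ℕ) ∧ p.1 < p.2 ∧ σ p.2 < σ p.1)).card

/-- The sum `sum(s̄)` of the four elements of `[n]` not occurring in the suffix of `σ`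
(i.e. of its first four values, recorded as 1-based values). -/
def sumBar (n : ℕ) (hn : 4 ≤ n) (σ : Equiv.Perm (Fin n)) : ℕ :=
  ∑ j : Fin 4, ((σ (Fin.castLE hn j) : ℕ) + 1)

/-- The exponent `inv(s) + sum(s̄)` of the sign `ε(s) = (−1)^{inv(s)+sum(s̄)}` associated
with the suffix `s` of `σ`; `ε(s) = +` iff this number is even. -/
def epsNum (n : ℕ) (hn : 4 ≤ n) (σ : Equiv.Perm (Fin n)) : ℕ :=
  suffixInv n σ + sumBar n hn σ

/-- Two permutations of `[n]` share the same length-`(n−4)` suffix. -/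
def sameSuffix (n : ℕ) (σ τ : Equiv.Perm (Fin n)) : Prop :=
  ∀ i : Fin n, 4 ≤ (i : ℕ) → σ i = τ i

/-- The matching `M = ⊔_s φ_s(M^{ε(s)})` of `Π_n`: an edge `{σ, τ}` belongs to `M` iff
`σ` and `τ` have the same suffix `s` and the patterns of their first four entries form an
edge of `M^{ε(s)}` in `Π_4`. -/
noncomputable def bigM (n : ℕ) (hn : 4 ≤ n) : Set (Sym2 (Equiv.Perm (Fin n))) :=
  {e | ∃ σ τ : Equiv.Perm (Fin n), e = s(σ, τ) ∧ sameSuffix n σ τ ∧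
    s(patt n hn σ, patt n hn τ) ∈
      (if Even (epsNum n hn σ) then Mplus else Mminus)}

/-- The companion matching `M^∘ = ⊔_s φ_s(M^{−ε(s)})` of `Π_n`. -/
noncomputable def bigM' (n : ℕ) (hn : 4 ≤ n) : Set (Sym2 (Equiv.Perm (Fin n))) :=
  {e | ∃ σ τ : Equiv.Perm (Fin n), e = s(σ, τ) ∧ sameSuffix n σ τ ∧
    s(patt n hn σ, patt n hn τ) ∈
      (if Even (epsNum n hn σ) then Mminus else Mplus)}

/-!
Write `σ ∈ Π_n` as `φ_s(π)`, where `π = patt σ` is the pattern of the first four entries and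
`s` the suffix. Splitting the inversions of `σ` into those inside the first four positions,
inside the suffix, and across, gives `inv σ ≡ inv π + inv s + sum(s̄) (mod 2)`; that is,
`ε(s) = sign σ · sign π`.

An edge `σ — σ·(i i+1)` of `Π_n` either lies inside a copy `φ_s(Π_4)`, where `M^±` is maximal,
or it flips `sign σ` while keeping the relative order of the first three entries of the pattern.
With `ε(s) = sign σ · sign π`, the second kind of edge reduces to a finite statement about
`Π_4`, which is checked by computation together with the other properties of `M^±`. So no edge
of `Π_n` has both ends exposed, and both unions are maximal matchings. Every vertex of `Π_4` is
covered by `M⁺` or by `M⁻`, so the exposed sets are disjoint. Finally, each of the `n!/24`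
copies contributes 8 edges.
-/

open Equiv Equiv.Perm Finset

theorem isMaximalMatching_of_forall_adj {V : Type*} {G : SimpleGraph V} {M : Set (Sym2 V)}
    (hM : IsMatching G M) (h : ∀ v w, G.Adj v w → Covered M v ∨ Covered M w) :
    IsMaximalMatching G M := by
  refine ⟨hM, fun M' hM' hMM' => (Set.Subset.antisymm (fun e he' => ?_) hMM')⟩
  by_contra he
  induction e using Sym2.ind with
  | _ v w =>
    have hdisj : ∀ f ∈ M, ∀ u ∈ s(v, w), u ∉ f := fun f hf =>
      hM'.2 _ he' f (hMM' hf) (fun h => he (h ▸ hf))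
    rcases h v w (hM'.1 he') with ⟨f, hf, hv⟩ | ⟨f, hf, hw⟩
    · exact hdisj f hf v (Sym2.mem_mk_left v w) hv
    · exact hdisj f hf w (Sym2.mem_mk_right v w) hw

theorem permutahedron_adj_iff {n : ℕ} {σ τ : Perm (Fin n)} :
    (permutahedron n).Adj σ τ ↔ ∃ i j : Fin n, (i : ℕ) + 1 = j ∧ τ = σ * swap i j := by
  rw [permutahedron, SimpleGraph.fromRel_adj]
  constructor
  · rintro ⟨-, h | ⟨i, j, hij, rfl⟩⟩
    · exact h
    · exact ⟨i, j, hij, (mul_swap_mul_self i j τ).symm⟩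
  · rintro ⟨i, j, hij, rfl⟩
    have hij' : i ≠ j := fun h => by rw [h] at hij; omega
    exact ⟨fun h => hij' (swap_eq_one_iff.mp (mul_eq_left.mp h.symm)), Or.inl ⟨i, j, hij, rfl⟩⟩

theorem Equiv.Perm.eq_of_forall_lt_iff {m : ℕ} {p q : Perm (Fin m)}
    (h : ∀ a b, p a < p b ↔ q a < q b) : p = q := by
  have hmono : StrictMono (q * p⁻¹) := fun x y hxy => by
    simpa using (h (p⁻¹ x) (p⁻¹ y)).1 (by simpa using hxy)
  ext a
  simpa using congrArg Fin.val (hmono.apply_eq (x := p a)).symm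

def Equiv.Perm.inversions {m : ℕ} (σ : Perm (Fin m)) : Finset (Fin m × Fin m) :=
  univ.filter fun p => p.1 < p.2 ∧ σ p.2 < σ p.1

theorem Equiv.Perm.signAux_eq_sign {m : ℕ} (σ : Perm (Fin m)) : signAux σ = sign σ := by
  suffices h : ∀ (s : Multiset (Fin m)) (hs : ∀ x, x ∈ s), signAux σ = signAux3 σ hs from
    h _ mem_univ
  intro s
  induction s using Quotient.inductionOn with
  | h l => exact fun hs => signAux_eq_signAux2 l σ (Equiv.refl _) fun x _ => hs x

theorem Equiv.Perm.sign_eq_neg_one_pow_card_inversions {m : ℕ} (σ : Perm (Fin m)) :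
    sign σ = (-1) ^ #(inversions σ) := by
  rw [← signAux_eq_sign, signAux, prod_ite, prod_const, prod_const_one, mul_one]
  congr 1
  refine card_nbij' (fun x => (x.2, x.1)) (fun p => ⟨p.2, p.1⟩) ?_ ?_ (fun _ _ => rfl)
    (fun _ _ => rfl)
  · intro x hx
    simp only [coe_filter, mem_finPairsLT, Set.mem_ofPred_eq, inversions, mem_univ,
      true_and] at hx ⊢
    exact ⟨hx.1, lt_of_le_of_ne hx.2 (σ.injective.ne hx.1.ne')⟩
  · intro p hp
    simp only [coe_filter, mem_finPairsLT, Set.mem_ofPred_eq, inversions, mem_univ,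
      true_and] at hp ⊢
    exact ⟨hp.1, hp.2.le⟩

theorem Equiv.Perm.card_filter_apply_lt {m : ℕ} (σ : Perm (Fin m)) (x : Fin m) :
    #(univ.filter fun y => σ y < σ x) = σ x := by
  rw [← Fin.card_Iio, ← filter_gt_eq_Iio]
  exact card_nbij' σ σ.symm (fun y hy => by simpa using hy) (fun z hz => by simpa using hz)
    (fun y _ => by simp) (fun z _ => by simp)

theorem Finset.card_filter_univ_prod {α β : Type*} [Fintype α] [Fintype β] (R : α → β → Prop)
    [∀ a, DecidablePred (R a)] :
    #(univ.filter fun p : α × β => R p.1 p.2) = ∑ a, #(univ.filter (R a)) := by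
  simp only [card_filter, Fintype.sum_prod_type]

theorem Equiv.Perm.card_inversions_eq_sum {m : ℕ} (σ : Perm (Fin m)) :
    #(inversions σ) = ∑ i, #(univ.filter fun j => i < j ∧ σ j < σ i) :=
  card_filter_univ_prod fun i j => i < j ∧ σ j < σ i

theorem Fin.sum_univ_eq_sum_castLE_add {M : Type*} [AddCommMonoid M] {m n : ℕ} (h : m ≤ n)
    (f : Fin n → M) :
    ∑ i, f i =
      ∑ a : Fin m, f (Fin.castLE h a) + ∑ i ∈ univ.filter fun i : Fin n => m ≤ (i : ℕ), f i := by
  rw [← sum_filter_add_sum_filter_not univ fun i : Fin n => (i : ℕ) < m]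
  have hlow : univ.filter (fun i : Fin n => (i : ℕ) < m) = univ.map (Fin.castLEEmb h) := by
    ext i
    simp only [mem_filter, mem_univ, true_and, mem_map, Fin.castLEEmb_apply]
    exact ⟨fun hi => ⟨⟨i, hi⟩, rfl⟩, by rintro ⟨a, rfl⟩; exact a.isLt⟩
  simp only [hlow, sum_map, Fin.castLEEmb_apply, not_lt]

theorem Fin.card_filter_eq_card_filter_castLE_add {m n : ℕ} (h : m ≤ n) (P : Fin n → Prop)
    [DecidablePred P] :
    #(univ.filter P) = #(univ.filter fun a : Fin m => P (Fin.castLE h a)) +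
      #(univ.filter fun i : Fin n => m ≤ (i : ℕ) ∧ P i) := by
  rw [← filter_filter, card_filter, card_filter, card_filter,
    Fin.sum_univ_eq_sum_castLE_add h]

noncomputable def MplusFinset : Finset (Sym2 (Perm (Fin 4))) :=
  { s(mk4 ![1,0,2,3], mk4 ![1,2,0,3]),
    s(mk4 ![2,1,3,0], mk4 ![1,2,3,0]),
    s(mk4 ![2,3,0,1], mk4 ![2,0,3,1]),
    s(mk4 ![1,3,0,2], mk4 ![3,1,0,2]),
    s(mk4 ![3,0,2,1], mk4 ![0,3,2,1]),
    s(mk4 ![0,1,3,2], mk4 ![0,3,1,2]),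
    s(mk4 ![2,0,1,3], mk4 ![0,2,1,3]),
    s(mk4 ![3,2,1,0], mk4 ![3,1,2,0]) }

noncomputable def MminusFinset : Finset (Sym2 (Perm (Fin 4))) :=
  { s(mk4 ![0,2,1,3], mk4 ![0,1,2,3]),
    s(mk4 ![1,0,3,2], mk4 ![1,3,0,2]),
    s(mk4 ![3,1,2,0], mk4 ![1,3,2,0]),
    s(mk4 ![2,1,0,3], mk4 ![1,2,0,3]),
    s(mk4 ![3,0,1,2], mk4 ![0,3,1,2]),
    s(mk4 ![2,0,3,1], mk4 ![0,2,3,1]),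
    s(mk4 ![3,2,0,1], mk4 ![3,0,2,1]),
    s(mk4 ![2,1,3,0], mk4 ![2,3,1,0]) }

/-- `M^e` for `e = ±1`, as a `Finset` so that the facts about `Π_4` below are decidable. -/
noncomputable def signedMatching (e : ℤˣ) : Finset (Sym2 (Perm (Fin 4))) :=
  if e = 1 then MplusFinset else MminusFinset

theorem coe_signedMatching_one : (signedMatching 1 : Set (Sym2 (Perm (Fin 4)))) = Mplus := by
  simp only [signedMatching, if_pos, MplusFinset, Mplus, coe_insert, coe_singleton]

theorem coe_signedMatching_neg_one :
    (signedMatching (-1) : Set (Sym2 (Perm (Fin 4)))) = Mminus := by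
  simp only [signedMatching, if_neg (by decide : (-1 : ℤˣ) ≠ 1), MminusFinset, Mminus, coe_insert,
    coe_singleton]

theorem card_signedMatching (e : ℤˣ) : #(signedMatching e) = 8 := by
  unfold signedMatching
  split <;> decide

theorem signedMatching_edge : ∀ (e : ℤˣ) (π π' : Perm (Fin 4)), s(π, π') ∈ signedMatching e →
    ∃ k : Fin 3, π' = π * swap k.castSucc k.succ := by
  decide +kernel

theorem signedMatching_disjoint : ∀ e : ℤˣ, ∀ E ∈ signedMatching e, ∀ E' ∈ signedMatching e,
    ∀ π, π ∈ E → π ∈ E' → E = E' := by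
  decide +kernel

theorem signedMatching_maximal : ∀ (e : ℤˣ) (π : Perm (Fin 4)) (k : Fin 3),
    (∃ E ∈ signedMatching e, π ∈ E) ∨ ∃ E ∈ signedMatching e, π * swap k.castSucc k.succ ∈ E := by
  decide +kernel

/-- Handles the edges `σ — σ·(i i+1)` of `Π_n` that move an entry of the suffix: the first three
entries of the pattern keep their relative order, and `ε` gets multiplied by
`-sign π · sign π'`. -/
theorem signedMatching_crossing : ∀ (e : ℤˣ) (π π' : Perm (Fin 4)),
    (∀ a b : Fin 3, π a.castSucc < π b.castSucc ↔ π' a.castSucc < π' b.castSucc) →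
    (∃ E ∈ signedMatching e, π ∈ E) ∨
      ∃ E ∈ signedMatching (-(e * sign π * sign π')), π' ∈ E := by
  decide +kernel

theorem signedMatching_covered (e : ℤˣ) (π : Perm (Fin 4)) :
    (∃ E ∈ signedMatching e, π ∈ E) ∨ ∃ E ∈ signedMatching (-e), π ∈ E := by
  simpa [mul_assoc, Int.units_mul_self] using signedMatching_crossing e π π fun _ _ => Iff.rfl

section Pattern

variable {n : ℕ} (hn : 4 ≤ n)

theorem patt_spec (σ : Perm (Fin n)) (a : Fin 4) :
    (firstFour n hn σ).orderEmbOfFin (firstFour_card n hn σ) (patt n hn σ a) =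
      σ (Fin.castLE hn a) := by
  rw [← coe_orderIsoOfFin_apply]
  exact congrArg Subtype.val (OrderIso.apply_symm_apply _ _)

theorem patt_lt_patt_iff (σ : Perm (Fin n)) (a b : Fin 4) :
    patt n hn σ a < patt n hn σ b ↔ σ (Fin.castLE hn a) < σ (Fin.castLE hn b) := by
  rw [← patt_spec, ← patt_spec, OrderEmbedding.lt_iff_lt]

theorem patt_eq_of_lt_iff {σ : Perm (Fin n)} {π : Perm (Fin 4)}
    (h : ∀ a b, σ (Fin.castLE hn a) < σ (Fin.castLE hn b) ↔ π a < π b) : patt n hn σ = π :=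
  eq_of_forall_lt_iff fun a b => (patt_lt_patt_iff hn σ a b).trans (h a b)

theorem mem_firstFour_iff {σ : Perm (Fin n)} {x : Fin n} :
    x ∈ firstFour n hn σ ↔ ∀ i : Fin n, 4 ≤ (i : ℕ) → σ i ≠ x := by
  simp only [firstFour, mem_image, mem_univ, true_and]
  constructor
  · rintro ⟨a, rfl⟩ i hi h
    have := congrArg Fin.val (σ.injective h)
    simp only [Fin.val_castLE] at this
    omega
  · intro h
    have hx : ((σ⁻¹ x : Fin n) : ℕ) < 4 := by
      by_contra hx
      exact h (σ⁻¹ x) (by omega) (by simp)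
    exact ⟨⟨_, hx⟩, by simp [Fin.castLE]⟩

theorem firstFour_eq_of_sameSuffix {σ τ : Perm (Fin n)} (h : sameSuffix n σ τ) :
    firstFour n hn σ = firstFour n hn τ := by
  ext x
  simp only [mem_firstFour_iff]
  exact forall₂_congr fun i hi => by rw [h i hi]

theorem eq_of_sameSuffix_of_patt_eq {σ τ : Perm (Fin n)} (h : sameSuffix n σ τ)
    (hp : patt n hn σ = patt n hn τ) : σ = τ := by
  ext i
  by_cases hi : 4 ≤ (i : ℕ)
  · rw [h i hi]
  · have hA := firstFour_eq_of_sameSuffix hn h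
    obtain ⟨a, rfl⟩ : ∃ a : Fin 4, Fin.castLE hn a = i := ⟨⟨i, by omega⟩, rfl⟩
    rw [← patt_spec, ← patt_spec, hp]
    congr 2
    simp only [hA]

noncomputable def prefixPerm : Perm (Fin 4) →* Perm (Fin n) :=
  viaEmbeddingHom (Fin.castLEEmb hn)

theorem prefixPerm_apply_castLE (μ : Perm (Fin 4)) (a : Fin 4) :
    prefixPerm hn μ (Fin.castLE hn a) = Fin.castLE hn (μ a) :=
  viaEmbedding_apply μ (Fin.castLEEmb hn) a

theorem prefixPerm_apply_of_le (μ : Perm (Fin 4)) {i : Fin n} (hi : 4 ≤ (i : ℕ)) :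
    prefixPerm hn μ i = i :=
  viaEmbedding_apply_of_notMem μ _ i fun ⟨a, ha⟩ => by
    have := congrArg Fin.val ha
    simp at this
    omega

theorem sign_prefixPerm (μ : Perm (Fin 4)) : sign (prefixPerm hn μ) = sign μ := by
  rw [prefixPerm, viaEmbeddingHom_apply, viaEmbedding]
  convert sign_extendDomain μ _

theorem prefixPerm_swap (a b : Fin 4) :
    prefixPerm hn (swap a b) = swap (Fin.castLE hn a) (Fin.castLE hn b) := by
  ext i
  by_cases hi : 4 ≤ (i : ℕ)
  · have hne : ∀ c : Fin 4, i ≠ Fin.castLE hn c := fun c h => by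
      have := congrArg Fin.val h
      simp at this
      omega
    rw [prefixPerm_apply_of_le hn _ hi, swap_apply_of_ne_of_ne (hne a) (hne b)]
  · obtain ⟨c, rfl⟩ : ∃ c : Fin 4, Fin.castLE hn c = i := ⟨⟨i, by omega⟩, rfl⟩
    rw [prefixPerm_apply_castLE, (Fin.castLE_injective hn).swap_apply]

theorem sameSuffix_mul_prefixPerm (σ : Perm (Fin n)) (μ : Perm (Fin 4)) :
    sameSuffix n σ (σ * prefixPerm hn μ) := fun i hi => by
  rw [Perm.mul_apply, prefixPerm_apply_of_le hn μ hi]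

theorem patt_mul_prefixPerm (σ : Perm (Fin n)) (μ : Perm (Fin 4)) :
    patt n hn (σ * prefixPerm hn μ) = patt n hn σ * μ :=
  patt_eq_of_lt_iff hn fun a b => by
    simp only [Perm.mul_apply, prefixPerm_apply_castLE, patt_lt_patt_iff]

theorem eq_mul_prefixPerm_of_sameSuffix {σ τ : Perm (Fin n)} (h : sameSuffix n σ τ) :
    τ = σ * prefixPerm hn ((patt n hn σ)⁻¹ * patt n hn τ) := by
  refine (eq_of_sameSuffix_of_patt_eq hn ?_ ?_).symm
  · exact fun i hi => (sameSuffix_mul_prefixPerm hn σ _ i hi).symm.trans (h i hi)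
  · rw [patt_mul_prefixPerm, mul_inv_cancel_left]

theorem exists_sameSuffix_patt_eq (σ : Perm (Fin n)) (π : Perm (Fin 4)) :
    ∃ τ, sameSuffix n σ τ ∧ patt n hn τ = π :=
  ⟨σ * prefixPerm hn ((patt n hn σ)⁻¹ * π), sameSuffix_mul_prefixPerm hn σ _, by
    rw [patt_mul_prefixPerm, mul_inv_cancel_left]⟩

end Pattern

section SuffixSign

variable {n : ℕ} (hn : 4 ≤ n)

noncomputable def suffixSign (σ : Perm (Fin n)) : ℤˣ :=
  sign σ * sign (patt n hn σ)

theorem suffixSign_mul_prefixPerm (σ : Perm (Fin n)) (μ : Perm (Fin 4)) :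
    suffixSign hn (σ * prefixPerm hn μ) = suffixSign hn σ := by
  rw [suffixSign, suffixSign, patt_mul_prefixPerm, map_mul, map_mul, sign_prefixPerm,
    mul_mul_mul_comm, Int.units_mul_self, mul_one]

theorem suffixSign_of_sameSuffix {σ τ : Perm (Fin n)} (h : sameSuffix n σ τ) :
    suffixSign hn τ = suffixSign hn σ := by
  rw [eq_mul_prefixPerm_of_sameSuffix hn h, suffixSign_mul_prefixPerm]

theorem suffixSign_mul_swap (σ : Perm (Fin n)) {i j : Fin n} (hij : i ≠ j) :
    suffixSign hn (σ * swap i j) =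
      -(suffixSign hn σ * sign (patt n hn σ) * sign (patt n hn (σ * swap i j))) := by
  rw [suffixSign, suffixSign, map_mul, sign_swap hij, mul_assoc (sign σ) (sign (patt n hn σ)),
    Int.units_mul_self, mul_one, mul_neg_one, neg_mul]

theorem card_inversions_from_castLE_add (σ : Perm (Fin n)) (a : Fin 4) :
    #(univ.filter fun j => Fin.castLE hn a < j ∧ σ j < σ (Fin.castLE hn a)) + patt n hn σ a =
      #(univ.filter fun b => a < b ∧ patt n hn σ b < patt n hn σ a) + σ (Fin.castLE hn a) := by
  set x := σ (Fin.castLE hn a)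
  have hlater : #(univ.filter fun j => Fin.castLE hn a < j ∧ σ j < x) =
      #(univ.filter fun b => a < b ∧ patt n hn σ b < patt n hn σ a) +
        #(univ.filter fun j : Fin n => 4 ≤ (j : ℕ) ∧ σ j < x) := by
    rw [Fin.card_filter_eq_card_filter_castLE_add hn]
    congr 2
    · ext b
      simp [patt_lt_patt_iff, x]
    · ext j
      simp only [mem_filter, mem_univ, true_and, and_congr_right_iff]
      intro hj
      simp only [Fin.lt_def, Fin.val_castLE, x]
      omega
  have hall : (x : ℕ) =
      patt n hn σ a + #(univ.filter fun j : Fin n => 4 ≤ (j : ℕ) ∧ σ j < x) := by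
    rw [← card_filter_apply_lt σ, Fin.card_filter_eq_card_filter_castLE_add hn,
      ← card_filter_apply_lt (patt n hn σ)]
    simp only [patt_lt_patt_iff, x]
  omega

theorem epsNum_add_card_inversions_patt (σ : Perm (Fin n)) :
    epsNum n hn σ + #(inversions (patt n hn σ)) = #(inversions σ) + 10 := by
  have hsuffix : suffixInv n σ = ∑ i ∈ univ.filter fun i : Fin n => 4 ≤ (i : ℕ),
      #(univ.filter fun j => i < j ∧ σ j < σ i) := by
    rw [suffixInv, card_filter_univ_prod fun i j : Fin n => 4 ≤ (i : ℕ) ∧ i < j ∧ σ j < σ i,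
      sum_filter]
    refine sum_congr rfl fun i _ => ?_
    split_ifs with hi <;> simp [hi]
  have hsum := sum_congr rfl fun a (_ : a ∈ univ) => card_inversions_from_castLE_add hn σ a
  have hperm : ∑ a : Fin 4, (patt n hn σ a : ℕ) = 6 :=
    (Equiv.sum_comp (patt n hn σ) fun a : Fin 4 => (a : ℕ)).trans rfl
  rw [sum_add_distrib, sum_add_distrib, hperm, ← card_inversions_eq_sum] at hsum
  rw [epsNum, sumBar, hsuffix, card_inversions_eq_sum σ, Fin.sum_univ_eq_sum_castLE_add hn,
    sum_add_distrib]
  simp only [sum_const, card_univ, Fintype.card_fin, smul_eq_mul]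
  omega

theorem even_epsNum_iff (σ : Perm (Fin n)) : Even (epsNum n hn σ) ↔ suffixSign hn σ = 1 := by
  have h := epsNum_add_card_inversions_patt hn σ
  rw [suffixSign, sign_eq_neg_one_pow_card_inversions, sign_eq_neg_one_pow_card_inversions,
    ← pow_add, neg_one_pow_eq_one_iff_even (by decide)]
  have hpar : (Even (epsNum n hn σ) ↔ Even #(inversions (patt n hn σ))) ↔
      Even #(inversions σ) := by
    rw [← Nat.even_add, h, Nat.even_add]
    simp [show Even 10 by decide]
  rw [Nat.even_add]
  tauto

end SuffixSign

section LiftedMatching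

variable {n : ℕ} (hn : 4 ≤ n)

def liftedMatching (c : ℤˣ) : Set (Sym2 (Perm (Fin n))) :=
  {e | ∃ σ τ : Perm (Fin n), e = s(σ, τ) ∧ sameSuffix n σ τ ∧
    s(patt n hn σ, patt n hn τ) ∈ signedMatching (c * suffixSign hn σ)}

theorem coe_signedMatching_mul_suffixSign (c : ℤˣ) (σ : Perm (Fin n)) :
    (signedMatching (c * suffixSign hn σ) : Set (Sym2 (Perm (Fin 4)))) =
      if Even (epsNum n hn σ) then ↑(signedMatching c) else ↑(signedMatching (-c)) := by
  by_cases h : suffixSign hn σ = 1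
  · rw [if_pos ((even_epsNum_iff hn σ).2 h), h, mul_one]
  · rw [if_neg (mt (even_epsNum_iff hn σ).1 h), Int.units_ne_iff_eq_neg.1 h, mul_neg_one]

theorem bigM_eq_liftedMatching : bigM n hn = liftedMatching hn 1 := by
  ext e
  simp only [bigM, liftedMatching, ← mem_coe, coe_signedMatching_mul_suffixSign,
    coe_signedMatching_one, coe_signedMatching_neg_one]

theorem bigM'_eq_liftedMatching : bigM' n hn = liftedMatching hn (-1) := by
  ext e
  simp only [bigM', liftedMatching, ← mem_coe, coe_signedMatching_mul_suffixSign, neg_neg,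
    coe_signedMatching_one, coe_signedMatching_neg_one]

theorem exists_of_mem_liftedMatching {c : ℤˣ} {e : Sym2 (Perm (Fin n))}
    (he : e ∈ liftedMatching hn c) {σ : Perm (Fin n)} (hσ : σ ∈ e) :
    ∃ τ, e = s(σ, τ) ∧ sameSuffix n σ τ ∧
      s(patt n hn σ, patt n hn τ) ∈ signedMatching (c * suffixSign hn σ) := by
  obtain ⟨σ', τ, rfl, hs, hE⟩ := he
  rcases Sym2.mem_iff.mp hσ with rfl | rfl
  · exact ⟨τ, rfl, hs, hE⟩
  · refine ⟨σ', Sym2.eq_swap, fun i hi => (hs i hi).symm, ?_⟩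
    rwa [suffixSign_of_sameSuffix hn hs, Sym2.eq_swap]

theorem covered_liftedMatching_iff (c : ℤˣ) (σ : Perm (Fin n)) :
    Covered (liftedMatching hn c) σ ↔
      ∃ E ∈ signedMatching (c * suffixSign hn σ), patt n hn σ ∈ E := by
  constructor
  · rintro ⟨e, he, hσ⟩
    obtain ⟨τ, rfl, -, hE⟩ := exists_of_mem_liftedMatching hn he hσ
    exact ⟨_, hE, Sym2.mem_mk_left _ _⟩
  · rintro ⟨E, hE, hσE⟩
    obtain ⟨π', rfl⟩ := Sym2.mem_iff_exists.mp hσE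
    obtain ⟨τ, hs, rfl⟩ := exists_sameSuffix_patt_eq hn σ π'
    exact ⟨s(σ, τ), ⟨σ, τ, rfl, hs, hE⟩, Sym2.mem_mk_left _ _⟩

theorem isMatching_liftedMatching (c : ℤˣ) :
    IsMatching (permutahedron n) (liftedMatching hn c) := by
  constructor
  · rintro _ ⟨σ, τ, rfl, hs, hE⟩
    obtain ⟨k, hk⟩ := signedMatching_edge _ _ _ hE
    rw [SimpleGraph.mem_edgeSet, permutahedron_adj_iff]
    refine ⟨Fin.castLE hn k.castSucc, Fin.castLE hn k.succ, by simp, ?_⟩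
    rw [eq_mul_prefixPerm_of_sameSuffix hn hs, hk, inv_mul_cancel_left, prefixPerm_swap]
  · intro e he f hf hne σ hσe hσf
    obtain ⟨τ, rfl, hs, hE⟩ := exists_of_mem_liftedMatching hn he hσe
    obtain ⟨τ', rfl, hs', hE'⟩ := exists_of_mem_liftedMatching hn hf hσf
    have hpatt := Sym2.congr_right.mp
      (signedMatching_disjoint _ _ hE _ hE' _ (Sym2.mem_mk_left _ _) (Sym2.mem_mk_left _ _))
    have hττ' : τ = τ' := eq_of_sameSuffix_of_patt_eq hn
      (fun i hi => (hs i hi).symm.trans (hs' i hi)) hpatt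
    exact hne (by rw [hττ'])

theorem covered_or_covered_mul_swap (c : ℤˣ) (σ : Perm (Fin n)) {i j : Fin n}
    (hij : (i : ℕ) + 1 = j) :
    Covered (liftedMatching hn c) σ ∨ Covered (liftedMatching hn c) (σ * swap i j) := by
  simp only [covered_liftedMatching_iff]
  by_cases hi : (i : ℕ) < 3
  · obtain ⟨k, rfl, rfl⟩ : ∃ k : Fin 3,
        Fin.castLE hn k.castSucc = i ∧ Fin.castLE hn k.succ = j :=
      ⟨⟨i, hi⟩, rfl, Fin.ext (by simp [← hij])⟩
    rw [← prefixPerm_swap, patt_mul_prefixPerm, suffixSign_mul_prefixPerm]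
    exact signedMatching_maximal _ _ k
  · have hfix (a : Fin 3) :
        (σ * swap i j) (Fin.castLE hn a.castSucc) = σ (Fin.castLE hn a.castSucc) := by
      have ha : ((Fin.castLE hn a.castSucc : Fin n) : ℕ) < 3 := by simp
      rw [Perm.mul_apply, swap_apply_of_ne_of_ne (Fin.ne_of_val_ne (by omega))
        (Fin.ne_of_val_ne (by omega))]
    have hne : i ≠ j := fun h => by rw [h] at hij; omega
    rw [suffixSign_mul_swap hn σ hne, mul_neg, ← mul_assoc, ← mul_assoc]
    refine signedMatching_crossing _ _ _ fun a b => ?_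
    rw [patt_lt_patt_iff, patt_lt_patt_iff, hfix, hfix]

theorem isMaximalMatching_liftedMatching (c : ℤˣ) :
    IsMaximalMatching (permutahedron n) (liftedMatching hn c) :=
  isMaximalMatching_of_forall_adj (isMatching_liftedMatching hn c) fun σ τ hadj => by
    obtain ⟨i, j, hij, rfl⟩ := permutahedron_adj_iff.mp hadj
    exact covered_or_covered_mul_swap hn c σ hij

end LiftedMatching

section Counting

variable {n : ℕ} (hn : 4 ≤ n)

noncomputable def sortPrefix (σ : Perm (Fin n)) : Perm (Fin n) :=
  σ * prefixPerm hn (patt n hn σ)⁻¹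

theorem patt_sortPrefix (σ : Perm (Fin n)) : patt n hn (sortPrefix hn σ) = 1 := by
  rw [sortPrefix, patt_mul_prefixPerm, mul_inv_cancel]

theorem sortPrefix_mul_prefixPerm {σ τ : Perm (Fin n)} (h : sameSuffix n σ τ) :
    sortPrefix hn σ * prefixPerm hn (patt n hn τ) = τ := by
  rw [sortPrefix, mul_assoc, ← map_mul]
  exact (eq_mul_prefixPerm_of_sameSuffix hn h).symm

theorem suffixSign_sortPrefix (σ : Perm (Fin n)) :
    suffixSign hn (sortPrefix hn σ) = suffixSign hn σ :=
  suffixSign_mul_prefixPerm hn σ _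

theorem patt_mul_prefixPerm_of_patt_eq_one {ρ : Perm (Fin n)} (hρ : patt n hn ρ = 1)
    (π : Perm (Fin 4)) : patt n hn (ρ * prefixPerm hn π) = π := by
  rw [patt_mul_prefixPerm, hρ, one_mul]

noncomputable def sortPrefixEquiv :
    Perm (Fin n) ≃ {ρ : Perm (Fin n) // patt n hn ρ = 1} × Perm (Fin 4) where
  toFun σ := (⟨sortPrefix hn σ, patt_sortPrefix hn σ⟩, patt n hn σ)
  invFun p := p.1.1 * prefixPerm hn p.2
  left_inv σ := sortPrefix_mul_prefixPerm hn fun _ _ => rfl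
  right_inv := fun ⟨⟨ρ, hρ⟩, π⟩ => by
    have hπ := patt_mul_prefixPerm_of_patt_eq_one hn hρ π
    refine Prod.ext (Subtype.ext ?_) hπ
    simp only [sortPrefix, hπ, mul_assoc, ← map_mul, mul_inv_cancel, map_one, mul_one]

theorem card_patt_eq_one_mul_24 :
    Nat.card {ρ : Perm (Fin n) // patt n hn ρ = 1} * 24 = n.factorial := by
  calc Nat.card {ρ : Perm (Fin n) // patt n hn ρ = 1} * 24
      = Nat.card ({ρ : Perm (Fin n) // patt n hn ρ = 1} × Perm (Fin 4)) := by
        rw [Nat.card_prod, Nat.card_perm, Nat.card_fin]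
        rfl
    _ = n.factorial := by
        rw [← Nat.card_congr (sortPrefixEquiv hn), Nat.card_perm, Nat.card_fin]

noncomputable def liftEdge (c : ℤˣ) :
    (Σ ρ : {ρ : Perm (Fin n) // patt n hn ρ = 1}, signedMatching (c * suffixSign hn ρ.1)) →
      Sym2 (Perm (Fin n)) :=
  fun x => x.2.1.map (x.1.1 * prefixPerm hn ·)

theorem liftEdge_injective (c : ℤˣ) : Function.Injective (liftEdge hn c) := by
  rintro ⟨ρ, E, hE⟩ ⟨ρ', E', hE'⟩ h
  have hmul : Function.Injective (ρ.1 * prefixPerm hn ·) := fun π π' h' => by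
    simpa [patt_mul_prefixPerm_of_patt_eq_one hn ρ.2] using congrArg (patt n hn) h'
  induction E using Sym2.ind with
  | _ a b =>
    obtain ⟨a', -, ha'⟩ := Sym2.mem_map.mp (h ▸ Sym2.mem_map.mpr ⟨a, Sym2.mem_mk_left a b, rfl⟩ :
      ρ.1 * prefixPerm hn a ∈ liftEdge hn c ⟨ρ', E', hE'⟩)
    have haa' : a' = a := by
      simpa [patt_mul_prefixPerm_of_patt_eq_one hn ρ.2,
        patt_mul_prefixPerm_of_patt_eq_one hn ρ'.2] using congrArg (patt n hn) ha'
    obtain rfl : ρ' = ρ := Subtype.ext (mul_right_cancel (haa' ▸ ha'))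
    obtain rfl : s(a, b) = E' := Sym2.map.injective hmul h
    rfl

theorem range_liftEdge (c : ℤˣ) : Set.range (liftEdge hn c) = liftedMatching hn c := by
  ext e
  constructor
  · rintro ⟨⟨ρ, E, hE⟩, rfl⟩
    induction E using Sym2.ind with
    | _ a b =>
      refine ⟨_, _, Sym2.map_mk .., fun i hi => ?_, ?_⟩
      · rw [← sameSuffix_mul_prefixPerm hn ρ.1 a i hi, sameSuffix_mul_prefixPerm hn ρ.1 b i hi]
      · rwa [patt_mul_prefixPerm_of_patt_eq_one hn ρ.2, patt_mul_prefixPerm_of_patt_eq_one hn ρ.2,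
          suffixSign_mul_prefixPerm]
  · rintro ⟨σ, τ, rfl, hs, hE⟩
    refine ⟨⟨⟨sortPrefix hn σ, patt_sortPrefix hn σ⟩, s(patt n hn σ, patt n hn τ), ?_⟩, ?_⟩
    · rwa [suffixSign_sortPrefix]
    · simp only [liftEdge, Sym2.map_mk, sortPrefix_mul_prefixPerm hn hs,
        sortPrefix_mul_prefixPerm hn fun _ _ => rfl]

theorem ncard_liftedMatching_mul_three (c : ℤˣ) :
    (liftedMatching hn c).ncard * 3 = n.factorial := by
  rw [← range_liftEdge, Set.ncard_range_of_injective (liftEdge_injective hn c), Nat.card_sigma,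
    ← card_patt_eq_one_mul_24 hn]
  simp [card_signedMatching, mul_assoc]

end Counting

/-- for `n ≥ 4`, the two matchings `M^• = ⊔_s φ_s(M^{ε(s)})` and
`M^∘ = ⊔_s φ_s(M^{−ε(s)})` are maximal matchings of `Π_n`, each of size `n!/3`, with
disjoint exposed-vertex sets; in particular every permutation of `[n]` is covered by
`M^•` or by `M^∘`. -/
theorem stmt15 (n : ℕ) (hn : 4 ≤ n) :
    IsMaximalMatching (permutahedron n) (bigM n hn) ∧
    IsMaximalMatching (permutahedron n) (bigM' n hn) ∧
    (bigM n hn).ncard * 3 = n.factorial ∧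
    (bigM' n hn).ncard * 3 = n.factorial ∧
    exposedSet (bigM n hn) ∩ exposedSet (bigM' n hn) = ∅ ∧
    ∀ σ : Equiv.Perm (Fin n), Covered (bigM n hn) σ ∨ Covered (bigM' n hn) σ := by
  have hcover (σ : Perm (Fin n)) : Covered (bigM n hn) σ ∨ Covered (bigM' n hn) σ := by
    rw [bigM_eq_liftedMatching, bigM'_eq_liftedMatching, covered_liftedMatching_iff,
      covered_liftedMatching_iff, one_mul, neg_one_mul]
    exact signedMatching_covered _ _
  refine ⟨?_, ?_, ?_, ?_, ?_, hcover⟩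
  · rw [bigM_eq_liftedMatching]
    exact isMaximalMatching_liftedMatching hn 1
  · rw [bigM'_eq_liftedMatching]
    exact isMaximalMatching_liftedMatching hn (-1)
  · rw [bigM_eq_liftedMatching]
    exact ncard_liftedMatching_mul_three hn 1
  · rw [bigM'_eq_liftedMatching]
    exact ncard_liftedMatching_mul_three hn (-1)
  · exact Set.eq_empty_iff_forall_notMem.mpr fun σ ⟨h, h'⟩ => (hcover σ).elim h h'
end
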